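/- arXiv:1908.01074 — 3 statements merged into one kernel-verified Lean document; each statement's English description precedes it below -/
import Mathlib

section
/- Let s ≥ 2 and let G be a fixed s-hypergraph with at least one edge, and let L_G be the property of containing a subhypergraph isomorphic to G. If p(n)·n^{1/ρ^max(G)} → 0 as n → ∞, then Pr[G^s(n,p) ⊨ L_G] → 0; if p(n)·n^{1/ρ^max(G)} → ∞, then Pr[G^s(n,p) ⊨ L_G] → 1. In other words, n^{−1/ρ^max(G)} is a threshold for the property L_G. -/
open Filter Topology

namespace RandomHypergraph

/-! ### Finite `s`-uniform hypergraphs (with vertices in `ℕ`) -/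

/-- An `s`-uniform hypergraph with a finite vertex set contained in `ℕ`. -/
structure HGraph (s : ℕ) where
  verts : Finset ℕ
  edges : Finset (Finset ℕ)
  edge_sub : ∀ e ∈ edges, e ⊆ verts
  edge_card : ∀ e ∈ edges, e.card = s

namespace HGraph

variable {s : ℕ}

/-- Subhypergraph relation. -/
def Sub (H G : HGraph s) : Prop := H.verts ⊆ G.verts ∧ H.edges ⊆ G.edges

/-- Density `ρ(G) = e(G)/v(G)`. -/
noncomputable def rho (G : HGraph s) : ℝ := (G.edges.card : ℝ) / (G.verts.card : ℝ)

/-- Maximal density `ρ^max(G)` over subhypergraphs with nonempty vertex set. -/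
noncomputable def rhoMax (G : HGraph s) : ℝ :=
  sSup {r : ℝ | ∃ H : HGraph s, H.Sub G ∧ H.verts.Nonempty ∧ r = H.rho}

/-- A strictly balanced hypergraph. -/
def StrictlyBalanced (G : HGraph s) : Prop :=
  ∀ H : HGraph s, H.Sub G → H ≠ G → H.verts.Nonempty → H.rho < G.rho

/-- Relative density `ρ(G,H) = (e(G)-e(H))/(v(G)-v(H))`. -/
noncomputable def rhoPair (G H : HGraph s) : ℝ :=
  ((G.edges.card : ℝ) - (H.edges.card : ℝ)) / ((G.verts.card : ℝ) - (H.verts.card : ℝ))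

/-- A strictly balanced pair `(G, H)`. -/
def PairStrictlyBalanced (G H : HGraph s) : Prop :=
  ∀ K : HGraph s, H.Sub K → K.Sub G → K ≠ H → K ≠ G → rhoPair K H < rhoPair G H

/-- Isomorphism of hypergraphs. -/
def Iso (G H : HGraph s) : Prop :=
  ∃ σ : ℕ → ℕ, Set.BijOn σ G.verts H.verts ∧ H.edges = G.edges.image (Finset.image σ)

/-- `σ` is an automorphism of `G` (normalized to be the identity off the vertex set). -/
def IsAuto (G : HGraph s) (σ : ℕ → ℕ) : Prop :=
  Set.BijOn σ G.verts G.verts ∧ (∀ x, x ∉ G.verts → σ x = x) ∧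
    G.edges = G.edges.image (Finset.image σ)

/-- The number of automorphisms of `G`. -/
noncomputable def autCount (G : HGraph s) : ℕ := Set.ncard {σ : ℕ → ℕ | G.IsAuto σ}

/-- `f_α(G,H) = (v(G) - v(H)) - α (e(G) - e(H))`. -/
noncomputable def fA (α : ℝ) (G H : HGraph s) : ℝ :=
  ((G.verts.card : ℝ) - (H.verts.card : ℝ)) - α * ((G.edges.card : ℝ) - (H.edges.card : ℝ))

/-- The pair `(G,H)` is `α`-safe. -/
def Asafe (α : ℝ) (G H : HGraph s) : Prop :=
  ∀ K : HGraph s, H.Sub K → K.Sub G → K ≠ H → 0 < fA α K H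

/-- The pair `(G,H)` is `α`-rigid. -/
def Arigid (α : ℝ) (G H : HGraph s) : Prop :=
  ∀ K : HGraph s, H.Sub K → K.Sub G → K ≠ G → fA α G K < 0

/-- The pair `(G,H)` is `α`-neutral. -/
def Aneutral (α : ℝ) (G H : HGraph s) : Prop :=
  (∀ K : HGraph s, H.Sub K → K.Sub G → K ≠ H → K ≠ G → 0 < fA α K H) ∧ fA α G H = 0

end HGraph

/-- The hypergraph with a single vertex `x` and no edges. -/
def singleHG (s : ℕ) (x : ℕ) : HGraph s := ⟨{x}, ∅, by simp, by simp⟩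

/-- The empty hypergraph. -/
def emptyHG (s : ℕ) : HGraph s := ⟨∅, ∅, by simp, by simp⟩

/-- The automorphisms of `H` extendable to an automorphism of `G`. -/
noncomputable def extAutCount {s : ℕ} (G H : HGraph s) : ℕ :=
  Set.ncard {σ : ℕ → ℕ | H.IsAuto σ ∧ ∃ τ : ℕ → ℕ, G.IsAuto τ ∧ ∀ x ∈ H.verts, τ x = σ x}

/-- The automorphisms of `G` fixing `V(H)` pointwise. -/
noncomputable def fixAutCount {s : ℕ} (G H : HGraph s) : ℕ :=
  Set.ncard {σ : ℕ → ℕ | G.IsAuto σ ∧ ∀ x ∈ H.verts, σ x = x}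

/-! ### Copies of hypergraphs inside an ambient hypergraph -/

/-- The ambient hypergraph with vertex set `A ⊆ V` and edge set `Γ` contains a copy
(a not necessarily induced subhypergraph isomorphic to) the `s`-hypergraph `G`. -/
def ContainsCopy {s : ℕ} {V : Type} [DecidableEq V] (A : Finset V) (Γ : Finset (Finset V))
    (G : HGraph s) : Prop :=
  ∃ f : ℕ → V, Set.InjOn f G.verts ∧ (∀ v ∈ G.verts, f v ∈ A) ∧ ∀ e ∈ G.edges, e.image f ∈ Γ

/-- `(W, F)` is a copy of `G` (a subhypergraph isomorphic to `G`) in the ambient hypergraph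
with edge set `Γ`. -/
def IsCopy {s : ℕ} {V : Type} [DecidableEq V] (Γ : Finset (Finset V)) (G : HGraph s)
    (W : Finset V) (F : Finset (Finset V)) : Prop :=
  F ⊆ Γ ∧ ∃ f : ℕ → V, Set.InjOn f G.verts ∧ W = G.verts.image f ∧
    F = G.edges.image (Finset.image f)

/-- The number of subhypergraphs of the hypergraph with edge set `Γ` isomorphic to `G`. -/
noncomputable def copyCount {s : ℕ} {V : Type} [DecidableEq V] (Γ : Finset (Finset V))
    (G : HGraph s) : ℕ :=
  Set.ncard {WF : Finset V × Finset (Finset V) | IsCopy Γ G WF.1 WF.2}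

/-- The number of copies of `H` in `Γ` which are not contained in any copy of `G`. -/
noncomputable def badCopyCount {s : ℕ} {V : Type} [DecidableEq V] (Γ : Finset (Finset V))
    (G H : HGraph s) : ℕ :=
  Set.ncard {WF : Finset V × Finset (Finset V) | IsCopy Γ H WF.1 WF.2 ∧
    ¬ ∃ W' F', IsCopy Γ G W' F' ∧ WF.1 ⊆ W' ∧ WF.2 ⊆ F'}

/-! ### Extensions and maximality -/

/-- `f` realizes a strict `(G,H)`-extension (of the tuple `f|_{V(H)}`) inside the ambient
hypergraph with vertex set `A` and edge set `Γ`. -/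
def IsStrictExt {s : ℕ} {V : Type} [DecidableEq V] (A : Finset V) (Γ : Finset (Finset V))
    (G H : HGraph s) (f : ℕ → V) : Prop :=
  Set.InjOn f G.verts ∧ (∀ v ∈ G.verts, f v ∈ A) ∧
    ∀ e : Finset ℕ, e ⊆ G.verts → e.card = s → ¬ e ⊆ H.verts →
      (e ∈ G.edges ↔ e.image f ∈ Γ)

/-- The pair `(G̃, H̃)` (given by the embedding `f` of the pair `(G,H)`) is `(K,T)`-maximal in
the ambient hypergraph with vertex set `A` and edge set `Γ`. -/
def PairMaximal {s : ℕ} {V : Type} [DecidableEq V] (A : Finset V) (Γ : Finset (Finset V))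
    (G H : HGraph s) (f : ℕ → V) (K T : HGraph s) : Prop :=
  ∀ t : ℕ → V, Set.InjOn t T.verts →
    (∀ v ∈ T.verts, t v ∈ G.verts.image f) →
    (¬ ∀ v ∈ T.verts, t v ∈ H.verts.image f) →
    ¬ ∃ h : ℕ → V, Set.InjOn h K.verts ∧ (∀ v ∈ K.verts, h v ∈ A) ∧
        (∀ v ∈ T.verts, h v = t v) ∧
        (∀ v ∈ K.verts, v ∉ T.verts → h v ∉ G.verts.image f) ∧
        (∀ e : Finset ℕ, e ⊆ K.verts → e.card = s → ¬ e ⊆ T.verts →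
          (e ∈ K.edges ↔ e.image h ∈ Γ)) ∧
        (∀ e' ∈ Γ, (e' ∩ (K.verts \ T.verts).image h).Nonempty →
          (e' ∩ (G.verts.image f \ T.verts.image t)).Nonempty →
          (∃ e ∈ K.edges, e' = e.image h) ∨ (∃ e ∈ G.edges, e' = e.image f))

/-! ### The random hypergraph `G^s(n,p)` -/

/-- All potential edges: the `s`-element subsets of `Fin n`. -/
def cands (s n : ℕ) : Finset (Finset (Fin n)) := Finset.univ.filter fun e => e.card = s

/-- The probability weight of the hypergraph with edge set `E` under `G^s(n,p)`. -/
noncomputable def weight (s n : ℕ) (p : ℝ) (E : Finset (Finset (Fin n))) : ℝ :=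
  p ^ E.card * (1 - p) ^ ((cands s n).card - E.card)

/-- `Pr[G^s(n,p) ⊨ A]` for a property `A` of (edge sets of) hypergraphs on `Fin n`. -/
noncomputable def pr (s n : ℕ) (p : ℝ) (A : Finset (Finset (Fin n)) → Prop) : ℝ :=
  ∑ E ∈ (cands s n).powerset, Set.indicator {E' | A E'} (weight s n p) E

/-- The expectation of a random variable `X` under `G^s(n,p)`. -/
noncomputable def expec (s n : ℕ) (p : ℝ) (X : Finset (Finset (Fin n)) → ℝ) : ℝ :=
  ∑ E ∈ (cands s n).powerset, weight s n p E * X E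

/-- Probability for a pair of independent random hypergraphs `G^s(n,p)`, `G^s(m,q)`. -/
noncomputable def pr2 (s n m : ℕ) (p q : ℝ)
    (A : Finset (Finset (Fin n)) → Finset (Finset (Fin m)) → Prop) : ℝ :=
  ∑ E1 ∈ (cands s n).powerset, ∑ E2 ∈ (cands s m).powerset,
    Set.indicator {E : Finset (Finset (Fin n)) × Finset (Finset (Fin m)) | A E.1 E.2}
      (fun E => weight s n p E.1 * weight s m q E.2) (E1, E2)

/-! ### First-order logic of `s`-uniform hypergraphs -/

/-- The first-order language of `s`-uniform hypergraphs: a single `s`-ary relation symbol `N`. -/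
def HLang (s : ℕ) : FirstOrder.Language := ⟨fun _ => Empty, fun k => PLift (k = s)⟩

/-- The hypergraph on vertex set `V` with edge set `E` as a structure in the language `HLang s`:
`N(x_1, …, x_s)` holds iff `{x_1, …, x_s} ∈ E`. -/
def hStructure (s : ℕ) {V : Type} [DecidableEq V] (E : Finset (Finset V)) :
    (HLang s).Structure V where
  funMap := fun f _ => f.elim
  RelMap := fun _ v => Finset.univ.image v ∈ E

/-- The quantifier depth of a first-order formula. -/
def qdepth {L : FirstOrder.Language} {α : Type} : {n : ℕ} → L.BoundedFormula α n → ℕ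
  | _, .falsum => 0
  | _, .equal _ _ => 0
  | _, .rel _ _ => 0
  | _, .imp f g => max (qdepth f) (qdepth g)
  | _, .all f => qdepth f + 1

/-- The hypergraph on `V` with edge set `E` satisfies the sentence `φ`. -/
def Sat (s : ℕ) {V : Type} [DecidableEq V] (E : Finset (Finset V))
    (φ : (HLang s).Sentence) : Prop :=
  @FirstOrder.Language.Sentence.Realize (HLang s) V (hStructure s E) φ

/-- `G^s(n, p(n))` obeys the zero-one `k`-law. -/
def ZeroOneLaw (s k : ℕ) (p : ℕ → ℝ) : Prop :=
  ∀ φ : (HLang s).Sentence, qdepth φ ≤ k →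
    Tendsto (fun n => pr s n (p n) fun E => Sat s E φ) atTop (nhds 0) ∨
    Tendsto (fun n => pr s n (p n) fun E => Sat s E φ) atTop (nhds 1)

/-- The spectrum `S_k`: all `α ∈ (0, s-1)` such that `G^s(n, n^{-α})` does not obey the
zero-one `k`-law. -/
def SpectrumSet (s k : ℕ) : Set ℝ :=
  {α : ℝ | 0 < α ∧ α < (s : ℝ) - 1 ∧ ¬ ZeroOneLaw s k fun n => (n : ℝ) ^ (-α)}

/-- The set of limit points of a set of reals. -/
def limitPts (T : Set ℝ) : Set ℝ := {x : ℝ | ∀ ε > 0, ∃ y ∈ T, y ≠ x ∧ |y - x| < ε}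

/-! ### The Ehrenfeucht game -/

/-- The list of chosen pairs induces a partial isomorphism between the hypergraphs
`(V, E1)` and `(W, E2)`. -/
def PartialIso (s : ℕ) {V W : Type} [DecidableEq V] [DecidableEq W]
    (E1 : Finset (Finset V)) (E2 : Finset (Finset W)) (L : List (V × W)) : Prop :=
  (∀ p ∈ L, ∀ q ∈ L, p.1 = q.1 ↔ p.2 = q.2) ∧
  ∀ c : Fin s → V × W, (∀ i, c i ∈ L) →
    (Finset.univ.image (fun i => (c i).1) ∈ E1 ↔ Finset.univ.image (fun i => (c i).2) ∈ E2)

/-- Duplicator has a winning strategy in the remaining `k` rounds of the Ehrenfeucht game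
`EHR` on the `s`-hypergraphs `(A, E1)` and `(B, E2)`, the list `L` of pairs having been
chosen so far. -/
def DupWins (s : ℕ) {V W : Type} [DecidableEq V] [DecidableEq W]
    (A : Finset V) (E1 : Finset (Finset V)) (B : Finset W) (E2 : Finset (Finset W)) :
    ℕ → List (V × W) → Prop
  | 0, L => PartialIso s E1 E2 L
  | (k+1), L => (∀ x ∈ A, ∃ y ∈ B, DupWins s A E1 B E2 k ((x, y) :: L)) ∧
      (∀ y ∈ B, ∃ x ∈ A, DupWins s A E1 B E2 k ((x, y) :: L))

/-! ### Extension properties -/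

/-- The full level `(k-1)` extension property for the `s`-hypergraph `(A, E)`. -/
def FullLevelExt (s k : ℕ) {V : Type} [DecidableEq V] (A : Finset V)
    (E : Finset (Finset V)) : Prop :=
  ∀ r : ℕ, s - 1 ≤ r → r ≤ k - 1 → ∀ z : Fin r → V, (∀ i, z i ∈ A) → Function.Injective z →
    ∀ 𝓐 : Finset (Finset (Fin r)), (∀ a ∈ 𝓐, a.card = s - 1) →
      ∃ w ∈ A, (∀ i, w ≠ z i) ∧
        ∀ a : Finset (Fin r), a.card = s - 1 → (insert w (a.image z) ∈ E ↔ a ∈ 𝓐)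

/-! ### Paths and distances -/

/-- There is a path of length exactly `t` (a sequence of `t` edges, consecutive ones
intersecting) connecting `a` and `b` in the hypergraph with edge set `E`. -/
def HasPath {V : Type} [DecidableEq V] (E : Finset (Finset V)) (a b : V) : ℕ → Prop
  | 0 => a = b
  | (t+1) => ∃ es : ℕ → Finset V, (∀ i ≤ t, es i ∈ E) ∧ a ∈ es 0 ∧ b ∈ es t ∧
      ∀ i, i + 1 ≤ t → (es i ∩ es (i+1)).Nonempty

/-- The hypergraph `P` is a path with `t` edges connecting `u` and `w`. -/
def IsPathHG (s : ℕ) (P : HGraph s) (u w : ℕ) (t : ℕ) : Prop :=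
  ∃ es : ℕ → Finset ℕ, Set.InjOn es (Finset.range t) ∧
    P.edges = (Finset.range t).image es ∧
    P.verts = (Finset.range t).biUnion es ∧
    (0 < t → u ∈ es 0 ∧ w ∈ es (t-1)) ∧
    ∀ i : ℕ, i + 1 < t → (es i ∩ es (i+1)).Nonempty

/-! ### Cyclic extensions and the family `𝓗_m` -/

/-- `G` is a cyclic `m`-extension of `H`. -/
def CyclicExt (s m : ℕ) (H G : HGraph s) : Prop :=
  H.Sub G ∧ HGraph.rhoMax G < (m : ℝ) / ((m : ℝ) * ((s : ℝ) - 1) - 1) ∧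
  ((∃ (k l x1 : ℕ) (y z : ℕ → ℕ) (U : Finset ℕ),
      1 ≤ k ∧ k ≤ m - 1 ∧ l < s - 1 ∧ x1 ∈ H.verts ∧
      Set.InjOn y (Finset.Icc 1 (k*(s-1))) ∧ Set.InjOn z (Finset.Icc 1 l) ∧
      (∀ i ∈ Finset.Icc 1 (k*(s-1)), y i ∉ H.verts) ∧
      (∀ j ∈ Finset.Icc 1 l, z j ∉ H.verts) ∧
      (∀ i ∈ Finset.Icc 1 (k*(s-1)), ∀ j ∈ Finset.Icc 1 l, y i ≠ z j) ∧
      G.verts = H.verts ∪ (Finset.Icc 1 (k*(s-1))).image y ∪ (Finset.Icc 1 l).image z ∧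
      U ⊆ (Finset.Icc 1 (k*(s-1) - 1)).image y ∧ U.card = s - 1 - l ∧
      G.edges = H.edges ∪
        (Finset.range k).image (fun j =>
          (Finset.Icc (j*(s-1)) ((j+1)*(s-1))).image (fun t => if t = 0 then x1 else y t)) ∪
        {insert (y (k*(s-1))) ((Finset.Icc 1 l).image z ∪ U)}) ∨
   (∃ (k l x1 x2 : ℕ) (y z : ℕ → ℕ) (U : Finset ℕ),
      1 ≤ k ∧ k ≤ m - 1 ∧ l ≤ s - 2 ∧ x1 ∈ H.verts ∧ x2 ∈ H.verts ∧ x1 ≠ x2 ∧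
      Set.InjOn y (Finset.Icc 1 (k*(s-1))) ∧ Set.InjOn z (Finset.Icc 1 l) ∧
      (∀ i ∈ Finset.Icc 1 (k*(s-1)), y i ∉ H.verts) ∧
      (∀ j ∈ Finset.Icc 1 l, z j ∉ H.verts) ∧
      (∀ i ∈ Finset.Icc 1 (k*(s-1)), ∀ j ∈ Finset.Icc 1 l, y i ≠ z j) ∧
      G.verts = H.verts ∪ (Finset.Icc 1 (k*(s-1))).image y ∪ (Finset.Icc 1 l).image z ∧
      U ⊆ (Finset.Icc 1 (k*(s-1) - 1)).image y ∧ U.card = s - 2 - l ∧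
      G.edges = H.edges ∪
        (Finset.range k).image (fun j =>
          (Finset.Icc (j*(s-1)) ((j+1)*(s-1))).image (fun t => if t = 0 then x1 else y t)) ∪
        {insert x2 (insert (y (k*(s-1))) ((Finset.Icc 1 l).image z ∪ U))}) ∨
   (∃ (l : ℕ) (X Y : Finset ℕ),
      2 ≤ l ∧ l ≤ s - 1 ∧ X ⊆ H.verts ∧ X.card = l ∧
      Disjoint Y H.verts ∧ Y.card = s - l ∧
      G.verts = H.verts ∪ Y ∧ G.edges = H.edges ∪ {X ∪ Y}))

/-- The family `𝓗_m` of `s`-hypergraphs: generated from a single vertex by cyclic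
`m`-extensions and by adding edges keeping `ρ^max < m/(m(s-1)-1)`. -/
inductive InH (s m : ℕ) : HGraph s → Prop
  | single (x : ℕ) : InH s m (singleHG s x)
  | cyc {H G : HGraph s} : InH s m H → CyclicExt s m H G → InH s m G
  | addEdges {H G : HGraph s} : InH s m H → G.verts = H.verts → H.edges ⊆ G.edges →
      HGraph.rhoMax G < (m : ℝ) / ((m : ℝ) * ((s : ℝ) - 1) - 1) → InH s m G

/-! ### Loose paths and cycles -/

/-- `P` is a loose path of length `c` from `u` to `w`. -/
def IsLoosePath (s : ℕ) (P : HGraph s) (c : ℕ) (u w : ℕ) : Prop :=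
  ∃ x : ℕ → ℕ, Set.InjOn x (Finset.range (c*(s-1)+1)) ∧
    P.verts = (Finset.range (c*(s-1)+1)).image x ∧
    P.edges = (Finset.range c).image (fun i => (Finset.range s).image (fun t => x (i*(s-1)+t))) ∧
    u = x 0 ∧ w = x (c*(s-1))

/-- `C` is a loose cycle of length `c`. -/
def IsLooseCycle (s : ℕ) (C : HGraph s) (c : ℕ) : Prop :=
  ∃ x : ℕ → ℕ, Set.InjOn x (Finset.range (c*(s-1))) ∧
    C.verts = (Finset.range (c*(s-1))).image x ∧
    C.edges = (Finset.range c).image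
      (fun i => (Finset.range s).image (fun t => x ((i*(s-1)+t) % (c*(s-1)))))


/-! ### Sparse hypergraphs -/

/-- `(K, T)` belongs to `𝓚^ρ`: a `(1/ρ)`-rigid pair with `v(K) ≤ n3`, `v(T) ≤ n4`. -/
def Krho (s : ℕ) (ρ : ℝ) (n3 n4 : ℕ) (K T : HGraph s) : Prop :=
  T.Sub K ∧ HGraph.Arigid (1/ρ) K T ∧ K.verts.card ≤ n3 ∧ T.verts.card ≤ n4

/-- The hypergraph `G` is `(n1, n2, n3, n4, ρ)`-sparse. -/
def Sparse (s n1 n2 n3 n4 : ℕ) (ρ : ℝ) (G : HGraph s) : Prop :=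
  (∀ H : HGraph s, H.verts.card ≤ n1 →
    (HGraph.rhoMax H > ρ → ¬ ContainsCopy G.verts G.edges H) ∧
    (HGraph.rhoMax H < ρ → ∃ f : ℕ → ℕ, Set.InjOn f H.verts ∧ (∀ v ∈ H.verts, f v ∈ G.verts) ∧
       (∀ e : Finset ℕ, e ⊆ H.verts → e.card = s → (e ∈ H.edges ↔ e.image f ∈ G.edges)) ∧
       ∀ K T : HGraph s, Krho s ρ n3 n4 K T →
         PairMaximal G.verts G.edges H (emptyHG s) f K T)) ∧
  (∀ H1 H2 : HGraph s, H2.Sub H1 → HGraph.Asafe (1/ρ) H1 H2 →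
    H1.verts.card ≤ n1 → H2.verts.card ≤ n2 →
    ∀ g : ℕ → ℕ, Set.InjOn g H2.verts → (∀ v ∈ H2.verts, g v ∈ G.verts) →
      ∃ f : ℕ → ℕ, (∀ v ∈ H2.verts, f v = g v) ∧ IsStrictExt G.verts G.edges H1 H2 f ∧
        ∀ K T : HGraph s, Krho s ρ n3 n4 K T → PairMaximal G.verts G.edges H1 H2 f K T)

/-! ### Counting maximal strict extensions in the random hypergraph -/

/-- `N^r_{(G,H)}(x̃_1, …, x̃_l)`: the number of strict `(G,H)`-extensions of the tuple
`g|_{V(H)}` in the hypergraph `Γ` on `Fin n` which are `(K,T)`-maximal for all `α`-rigid and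
`α`-neutral pairs `(K,T)` with `v(T) ≤ v(G)` and `v(K) - v(T) ≤ r`. -/
noncomputable def NExtCount {s : ℕ} (n : ℕ) (Γ : Finset (Finset (Fin n))) (G H : HGraph s)
    (r : ℕ) (α : ℝ) (g : ℕ → Fin n) : ℕ :=
  Set.ncard {f : ℕ → Fin n |
    (∀ v, v ∉ G.verts → f v = g v) ∧ (∀ v ∈ H.verts, f v = g v) ∧
    IsStrictExt Finset.univ Γ G H f ∧
    ∀ K T : HGraph s, T.Sub K → T.verts.card ≤ G.verts.card →
      (K.verts \ T.verts).card ≤ r →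
      (HGraph.Arigid α K T ∨ HGraph.Aneutral α K T) →
      PairMaximal Finset.univ Γ G H f K T}

/-! ### Hypergraphs as first-order structures on their own vertex set -/

/-- The hypergraph `G` as a structure in the language `HLang s` with carrier its vertex set. -/
def hgStructure (s : ℕ) (G : HGraph s) : (HLang s).Structure {x : ℕ // x ∈ G.verts} where
  funMap := fun f _ => f.elim
  RelMap := fun _ v => Finset.univ.image (fun i => (v i).1) ∈ G.edges



open Finset in
theorem sum_pow_card {β : Type*} [DecidableEq β] (S : Finset β) (a b : ℝ) :
    ∑ E ∈ S.powerset, a ^ E.card * b ^ (S.card - E.card) = (a + b) ^ S.card := by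
  induction S using Finset.induction_on with
  | empty => simp
  | insert x S hx ih =>
    have hinj : ∀ E ∈ S.powerset, ∀ E' ∈ S.powerset,
        insert x E = insert x E' → E = E' := by
      intro E hE E' hE' h
      rw [Finset.mem_powerset] at hE hE'
      have hxE : x ∉ E := fun hc => hx (hE hc)
      have hxE' : x ∉ E' := fun hc => hx (hE' hc)
      rw [← Finset.erase_insert hxE, ← Finset.erase_insert hxE', h]
    rw [Finset.powerset_insert, Finset.sum_union, Finset.sum_image hinj]
    · have h1 : ∀ E ∈ S.powerset, a ^ E.card * b ^ ((insert x S).card - E.card)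
          = b * (a ^ E.card * b ^ (S.card - E.card)) := by
        intro E hE
        rw [Finset.mem_powerset] at hE
        have hc : (insert x S).card - E.card = (S.card - E.card) + 1 := by
          rw [Finset.card_insert_of_notMem hx]
          have := Finset.card_le_card hE
          omega
        rw [hc, pow_succ]; ring
      have h2 : ∀ E ∈ S.powerset, a ^ (insert x E).card * b ^ ((insert x S).card - (insert x E).card)
          = a * (a ^ E.card * b ^ (S.card - E.card)) := by
        intro E hE
        rw [Finset.mem_powerset] at hE
        have hxE : x ∉ E := fun hc => hx (hE hc)
        rw [Finset.card_insert_of_notMem hxE, Finset.card_insert_of_notMem hx]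
        have : S.card + 1 - (E.card + 1) = S.card - E.card := by omega
        rw [this, pow_succ]; ring
      rw [Finset.sum_congr rfl h1, Finset.sum_congr rfl h2, ← Finset.mul_sum,
        ← Finset.mul_sum, ih, Finset.card_insert_of_notMem hx, pow_succ]
      ring
    · rw [Finset.disjoint_left]
      intro E hE hE'
      rw [Finset.mem_powerset] at hE
      rw [Finset.mem_image] at hE'
      obtain ⟨E', _, rfl⟩ := hE'
      exact hx (hE (Finset.mem_insert_self x E'))

open Finset in
theorem sum_pow_card_superset {β : Type*} [DecidableEq β] (S F : Finset β) (hF : F ⊆ S) (a b : ℝ) :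
    ∑ E ∈ S.powerset.filter (fun E => F ⊆ E), a ^ E.card * b ^ (S.card - E.card)
      = a ^ F.card * (a + b) ^ ((S \ F).card) := by
  have himg : S.powerset.filter (fun E => F ⊆ E) = (S \ F).powerset.image (· ∪ F) := by
    ext E
    simp only [Finset.mem_filter, Finset.mem_powerset, Finset.mem_image]
    constructor
    · rintro ⟨hES, hFE⟩
      refine ⟨E \ F, fun x hxE => ?_, ?_⟩
      · rw [Finset.mem_sdiff] at hxE ⊢
        exact ⟨hES hxE.1, hxE.2⟩
      · rw [Finset.sdiff_union_of_subset hFE]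
    · rintro ⟨E', hE', rfl⟩
      constructor
      · exact Finset.union_subset (fun x hx => (Finset.mem_sdiff.mp (hE' hx)).1) hF
      · exact Finset.subset_union_right
  rw [himg, Finset.sum_image]
  · have hterm : ∀ E' ∈ (S \ F).powerset,
        a ^ (E' ∪ F).card * b ^ (S.card - (E' ∪ F).card)
          = a ^ F.card * (a ^ E'.card * b ^ ((S \ F).card - E'.card)) := by
      intro E' hE'
      rw [Finset.mem_powerset] at hE'
      have hdisj : Disjoint E' F := by
        rw [Finset.disjoint_left]
        intro x hxE hxF
        exact (Finset.mem_sdiff.mp (hE' hxE)).2 hxF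
      have hcard : (E' ∪ F).card = E'.card + F.card := Finset.card_union_of_disjoint hdisj
      have hSF : (S \ F).card = S.card - F.card := Finset.card_sdiff_of_subset hF
      have h1 : E'.card ≤ (S \ F).card := Finset.card_le_card hE'
      have h2 : F.card ≤ S.card := Finset.card_le_card hF
      have h3 : S.card - (E'.card + F.card) = (S \ F).card - E'.card := by omega
      rw [hcard, h3, pow_add]; ring
    rw [Finset.sum_congr rfl hterm, ← Finset.mul_sum, sum_pow_card]
  · intro E1 hE1 E2 hE2 h
    rw [Finset.mem_coe, Finset.mem_powerset] at hE1 hE2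
    have key : ∀ E : Finset β, E ⊆ S \ F → E = (E ∪ F) \ F := by
      intro E hE
      rw [Finset.union_sdiff_right]
      exact (Finset.sdiff_eq_self_of_disjoint (Finset.disjoint_right.mpr
        (fun x hxF hxE => (Finset.mem_sdiff.mp (hE hxE)).2 hxF))).symm
    rw [key E1 hE1, key E2 hE2, show E1 ∪ F = E2 ∪ F from h]

section PrLemmas

variable {s n : ℕ} {p : ℝ}

theorem weight_nonneg (hp0 : 0 ≤ p) (hp1 : p ≤ 1) (E : Finset (Finset (Fin n))) :
    0 ≤ weight s n p E := by
  unfold weight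
  have h1 : (0:ℝ) ≤ 1 - p := by linarith
  exact mul_nonneg (pow_nonneg hp0 _) (pow_nonneg h1 _)

theorem pr_eq_sum_filter (A : Finset (Finset (Fin n)) → Prop) [DecidablePred A] :
    pr s n p A = ∑ E ∈ (cands s n).powerset.filter A, weight s n p E := by
  rw [pr, Finset.sum_filter]
  apply Finset.sum_congr rfl
  intro E _
  by_cases h : A E <;> simp [h, Set.indicator_apply]

theorem sum_weight_eq_one (hp0 : 0 ≤ p) (hp1 : p ≤ 1) :
    ∑ E ∈ (cands s n).powerset, weight s n p E = 1 := by
  unfold weight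
  rw [sum_pow_card]
  norm_num

theorem pr_superset {F : Finset (Finset (Fin n))}
    (hF : F ⊆ cands s n) : pr s n p (fun E => F ⊆ E) = p ^ F.card := by
  classical
  rw [pr_eq_sum_filter]
  unfold weight
  have := sum_pow_card_superset (cands s n) F hF p (1 - p)
  rw [Finset.filter_congr_decidable] at this ⊢
  rw [this]
  norm_num

theorem pr_nonneg (hp0 : 0 ≤ p) (hp1 : p ≤ 1) (A : Finset (Finset (Fin n)) → Prop) :
    0 ≤ pr s n p A := by
  classical
  rw [pr_eq_sum_filter]
  exact Finset.sum_nonneg fun E _ => weight_nonneg hp0 hp1 E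

theorem pr_mono (hp0 : 0 ≤ p) (hp1 : p ≤ 1) {A B : Finset (Finset (Fin n)) → Prop}
    (h : ∀ E, A E → B E) : pr s n p A ≤ pr s n p B := by
  classical
  rw [pr_eq_sum_filter, pr_eq_sum_filter]
  apply Finset.sum_le_sum_of_subset_of_nonneg
  · intro E hE
    rw [Finset.mem_filter] at hE ⊢
    exact ⟨hE.1, h E hE.2⟩
  · intro E _ _
    exact weight_nonneg hp0 hp1 E

theorem pr_compl (hp0 : 0 ≤ p) (hp1 : p ≤ 1) (A : Finset (Finset (Fin n)) → Prop) :
    pr s n p A + pr s n p (fun E => ¬ A E) = 1 := by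
  classical
  rw [pr_eq_sum_filter, pr_eq_sum_filter, ← sum_weight_eq_one (s := s) (n := n) hp0 hp1,
    ← Finset.sum_filter_add_sum_filter_not ((cands s n).powerset) A]

theorem pr_or_le (hp0 : 0 ≤ p) (hp1 : p ≤ 1) (A B : Finset (Finset (Fin n)) → Prop) :
    pr s n p (fun E => A E ∨ B E) ≤ pr s n p A + pr s n p B := by
  classical
  rw [pr_eq_sum_filter, pr_eq_sum_filter, pr_eq_sum_filter]
  have hsub : (cands s n).powerset.filter (fun E => A E ∨ B E)
      ⊆ (cands s n).powerset.filter A ∪ (cands s n).powerset.filter B := by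
    intro E hE
    rw [Finset.mem_filter] at hE
    rw [Finset.mem_union, Finset.mem_filter, Finset.mem_filter]
    rcases hE.2 with h | h
    · exact Or.inl ⟨hE.1, h⟩
    · exact Or.inr ⟨hE.1, h⟩
  calc ∑ E ∈ (cands s n).powerset.filter (fun E => A E ∨ B E), weight s n p E
      ≤ ∑ E ∈ (cands s n).powerset.filter A ∪ (cands s n).powerset.filter B,
          weight s n p E := by
        apply Finset.sum_le_sum_of_subset_of_nonneg hsub
        intro E _ _; exact weight_nonneg hp0 hp1 E
    _ ≤ ∑ E ∈ (cands s n).powerset.filter A, weight s n p E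
          + ∑ E ∈ (cands s n).powerset.filter B, weight s n p E := by
        rw [← Finset.union_sdiff_self_eq_union, Finset.sum_union Finset.disjoint_sdiff]
        have h2 : ∑ E ∈ (cands s n).powerset.filter B \ (cands s n).powerset.filter A,
            weight s n p E ≤ ∑ E ∈ (cands s n).powerset.filter B, weight s n p E := by
          apply Finset.sum_le_sum_of_subset_of_nonneg (Finset.sdiff_subset)
          intro E _ _; exact weight_nonneg hp0 hp1 E
        linarith

theorem pr_false (hp0 : 0 ≤ p) (hp1 : p ≤ 1) :
    pr s n p (fun _ => False) = 0 := by
  classical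
  rw [pr_eq_sum_filter]
  simp

theorem pr_le_sum {ι : Type*} [DecidableEq ι] (hp0 : 0 ≤ p) (hp1 : p ≤ 1) (I : Finset ι)
    (Q : ι → Finset (Finset (Fin n)) → Prop) :
    pr s n p (fun E => ∃ i ∈ I, Q i E) ≤ ∑ i ∈ I, pr s n p (Q i) := by
  classical
  induction I using Finset.induction_on with
  | empty => simp [pr_false hp0 hp1]
  | insert a I hx ih =>
    rw [Finset.sum_insert hx]
    calc pr s n p (fun E => ∃ i ∈ insert a I, Q i E)
        ≤ pr s n p (Q a) + pr s n p (fun E => ∃ i ∈ I, Q i E) := by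
          refine le_trans (pr_mono hp0 hp1 ?_) (pr_or_le hp0 hp1 _ _)
          intro E hE
          obtain ⟨i, hi, hQ⟩ := hE
          rcases Finset.mem_insert.mp hi with rfl | hi
          · exact Or.inl hQ
          · exact Or.inr ⟨i, hi, hQ⟩
      _ ≤ pr s n p (Q a) + ∑ i ∈ I, pr s n p (Q i) := by linarith

end PrLemmas

section RhoFacts

variable {s : ℕ}

theorem image_injOn_subsets {α : Type*} [DecidableEq α] {g : ℕ → α} {V : Finset ℕ}
    (hg : Set.InjOn g V) {e1 e2 : Finset ℕ} (h1 : e1 ⊆ V) (h2 : e2 ⊆ V)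
    (h : e1.image g = e2.image g) : e1 = e2 := by
  ext x
  constructor
  · intro hx
    have : g x ∈ e2.image g := h ▸ Finset.mem_image_of_mem g hx
    obtain ⟨y, hy, hyx⟩ := Finset.mem_image.mp this
    rwa [← hg (h2 hy) (h1 hx) hyx]
  · intro hx
    have : g x ∈ e1.image g := h ▸ Finset.mem_image_of_mem g hx
    obtain ⟨y, hy, hyx⟩ := Finset.mem_image.mp this
    rwa [← hg (h1 hy) (h2 hx) hyx]

theorem rhoSet_finite (G : HGraph s) :
    {r : ℝ | ∃ H : HGraph s, H.Sub G ∧ H.verts.Nonempty ∧ r = H.rho}.Finite := by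
  apply Set.Finite.subset (Set.Finite.image (f := fun q : ℕ × ℕ => (q.1 : ℝ) / (q.2 : ℝ))
    ((Set.finite_Iic G.edges.card).prod (Set.finite_Iic G.verts.card)))
  rintro r ⟨H, hSub, _, rfl⟩
  exact ⟨(H.edges.card, H.verts.card),
    ⟨Finset.card_le_card hSub.2, Finset.card_le_card hSub.1⟩, rfl⟩

theorem rhoSet_nonempty (G : HGraph s) (hG : G.verts.Nonempty) :
    {r : ℝ | ∃ H : HGraph s, H.Sub G ∧ H.verts.Nonempty ∧ r = H.rho}.Nonempty := by
  obtain ⟨x, hx⟩ := hG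
  refine ⟨(singleHG s x).rho, singleHG s x, ⟨?_, ?_⟩, ⟨x, by simp [singleHG]⟩, rfl⟩
  · simpa [singleHG] using hx
  · simp [singleHG]

theorem rho_le_rhoMax {G H : HGraph s} (h : H.Sub G) (hne : H.verts.Nonempty) :
    H.rho ≤ HGraph.rhoMax G :=
  le_csSup (rhoSet_finite G).bddAbove ⟨H, h, hne, rfl⟩

theorem sub_refl (G : HGraph s) : G.Sub G := ⟨Finset.Subset.refl _, Finset.Subset.refl _⟩

theorem verts_nonempty_of_edges (hs : 1 ≤ s) {G : HGraph s} (hG : G.edges.Nonempty) :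
    G.verts.Nonempty := by
  obtain ⟨e, he⟩ := hG
  have hcard := G.edge_card e he
  have : e.Nonempty := Finset.card_pos.mp (by omega)
  obtain ⟨x, hx⟩ := this
  exact ⟨x, G.edge_sub e he hx⟩

theorem rho_pos {G : HGraph s} (hG : G.edges.Nonempty) (hv : G.verts.Nonempty) :
    0 < G.rho := by
  unfold HGraph.rho
  apply div_pos
  · exact_mod_cast Finset.card_pos.mpr hG
  · exact_mod_cast Finset.card_pos.mpr hv

theorem rhoMax_pos (hs : 1 ≤ s) {G : HGraph s} (hG : G.edges.Nonempty) :
    0 < HGraph.rhoMax G :=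
  lt_of_lt_of_le (rho_pos hG (verts_nonempty_of_edges hs hG))
    (rho_le_rhoMax (sub_refl G) (verts_nonempty_of_edges hs hG))

theorem exists_rhoMax (G : HGraph s) (hG : G.verts.Nonempty) :
    ∃ H : HGraph s, H.Sub G ∧ H.verts.Nonempty ∧ H.rho = HGraph.rhoMax G := by
  have hmem := Set.Nonempty.csSup_mem (rhoSet_nonempty G hG) (rhoSet_finite G)
  obtain ⟨H, hSub, hne, heq⟩ := hmem
  exact ⟨H, hSub, hne, heq.symm⟩

theorem edges_nonempty_of_rho_pos {G : HGraph s} (h : 0 < G.rho) : G.edges.Nonempty := by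
  by_contra hc
  rw [Finset.not_nonempty_iff_eq_empty] at hc
  unfold HGraph.rho at h
  rw [hc] at h
  simp at h

end RhoFacts

section ExtFun

variable {s n : ℕ}

/-- Extend `f0 : ↥H.verts → Fin n` to `ℕ → Fin n` using an arbitrary vertex value. -/
noncomputable def extf (H : HGraph s) (hH : H.verts.Nonempty) (f0 : {x // x ∈ H.verts} → Fin n) :
    ℕ → Fin n := fun x =>
  if h : x ∈ H.verts then f0 ⟨x, h⟩ else f0 ⟨hH.choose, hH.choose_spec⟩

theorem extf_mem (H : HGraph s) (hH : H.verts.Nonempty) (f0 : {x // x ∈ H.verts} → Fin n)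
    {x : ℕ} (h : x ∈ H.verts) : extf H hH f0 x = f0 ⟨x, h⟩ := dif_pos h

theorem injOn_extf {H : HGraph s} {hH : H.verts.Nonempty} {f0 : {x // x ∈ H.verts} → Fin n}
    (hf0 : Function.Injective f0) : Set.InjOn (extf H hH f0) H.verts := by
  intro x hx y hy hxy
  rw [Finset.mem_coe] at hx hy
  rw [extf_mem H hH f0 hx, extf_mem H hH f0 hy] at hxy
  exact congrArg Subtype.val (hf0 hxy)

/-- The edge set of the copy of `H` given by `f0`. -/
noncomputable def edgeImg (H : HGraph s) (hH : H.verts.Nonempty)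
    (f0 : {x // x ∈ H.verts} → Fin n) : Finset (Finset (Fin n)) :=
  H.edges.image (fun e => e.image (extf H hH f0))

theorem image_extf_eq (H : HGraph s) (hH : H.verts.Nonempty) (f : ℕ → Fin n)
    {e : Finset ℕ} (he : e ⊆ H.verts) :
    e.image (extf H hH (fun x => f x.1)) = e.image f := by
  apply Finset.image_congr
  intro x hx
  rw [extf_mem H hH _ (he hx)]

theorem card_edgeImg {H : HGraph s} (hH : H.verts.Nonempty)
    {f0 : {x // x ∈ H.verts} → Fin n} (hf0 : Function.Injective f0) :
    (edgeImg H hH f0).card = H.edges.card := by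
  apply Finset.card_image_of_injOn
  intro e1 h1 e2 h2 h
  exact image_injOn_subsets (injOn_extf hf0) (H.edge_sub e1 h1) (H.edge_sub e2 h2) h

theorem edgeImg_subset_cands {H : HGraph s} (hH : H.verts.Nonempty)
    {f0 : {x // x ∈ H.verts} → Fin n} (hf0 : Function.Injective f0) :
    edgeImg H hH f0 ⊆ cands s n := by
  intro e' he'
  obtain ⟨e, he, rfl⟩ := Finset.mem_image.mp he'
  rw [cands, Finset.mem_filter]
  refine ⟨Finset.mem_univ _, ?_⟩
  rw [Finset.card_image_of_injOn ((injOn_extf hf0).mono (by exact_mod_cast H.edge_sub e he))]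
  exact H.edge_card e he

theorem containsCopy_iff (H : HGraph s) (hH : H.verts.Nonempty) (E : Finset (Finset (Fin n))) :
    ContainsCopy Finset.univ E H ↔
      ∃ f0 : {x // x ∈ H.verts} → Fin n, Function.Injective f0 ∧ edgeImg H hH f0 ⊆ E := by
  constructor
  · rintro ⟨f, hinj, _, hedges⟩
    refine ⟨fun x => f x.1, ?_, ?_⟩
    · intro x y hxy
      exact Subtype.ext (hinj x.2 y.2 hxy)
    · intro e' he'
      obtain ⟨e, he, rfl⟩ := Finset.mem_image.mp he'
      rw [image_extf_eq H hH f (H.edge_sub e he)]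
      exact hedges e he
  · rintro ⟨f0, hinj, hsub⟩
    refine ⟨extf H hH f0, injOn_extf hinj, fun v _ => Finset.mem_univ _, ?_⟩
    intro e he
    exact hsub (Finset.mem_image_of_mem _ he)

open scoped Classical in
theorem pr_contains_le {p : ℝ} (hp0 : 0 ≤ p) (hp1 : p ≤ 1) (H : HGraph s)
    (hH : H.verts.Nonempty) :
    pr s n p (fun E => ContainsCopy Finset.univ E H)
      ≤ (n : ℝ) ^ H.verts.card * p ^ H.edges.card := by
  classical
  have h1 : pr s n p (fun E => ContainsCopy Finset.univ E H)
      ≤ ∑ f0 ∈ (Finset.univ : Finset ({x // x ∈ H.verts} → Fin n)).filter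
          Function.Injective, pr s n p (fun E => edgeImg H hH f0 ⊆ E) := by
    refine le_trans (pr_mono hp0 hp1 ?_) (pr_le_sum hp0 hp1 _ _)
    intro E hE
    obtain ⟨f0, hinj, hsub⟩ := (containsCopy_iff H hH E).mp hE
    exact ⟨f0, Finset.mem_filter.mpr ⟨Finset.mem_univ _, hinj⟩, hsub⟩
  have h2 : ∀ f0 ∈ (Finset.univ : Finset ({x // x ∈ H.verts} → Fin n)).filter
      Function.Injective, pr s n p (fun E => edgeImg H hH f0 ⊆ E) = p ^ H.edges.card := by
    intro f0 hf0
    have hinj := (Finset.mem_filter.mp hf0).2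
    rw [pr_superset (edgeImg_subset_cands hH hinj), card_edgeImg hH hinj]
  rw [Finset.sum_congr rfl h2, Finset.sum_const, nsmul_eq_mul] at h1
  refine le_trans h1 (mul_le_mul_of_nonneg_right ?_ (pow_nonneg hp0 _))
  have hcard : ((Finset.univ : Finset ({x // x ∈ H.verts} → Fin n)).filter
      Function.Injective).card ≤ n ^ H.verts.card := by
    calc _ ≤ (Finset.univ : Finset ({x // x ∈ H.verts} → Fin n)).card :=
          Finset.card_filter_le _ _
      _ = n ^ H.verts.card := by
          rw [Finset.card_univ, Fintype.card_fun, Fintype.card_fin, Fintype.card_coe]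
  calc (((Finset.univ : Finset ({x // x ∈ H.verts} → Fin n)).filter
      Function.Injective).card : ℝ) ≤ ((n ^ H.verts.card : ℕ) : ℝ) := by exact_mod_cast hcard
    _ = (n : ℝ) ^ H.verts.card := by push_cast; ring

end ExtFun

theorem containsCopy_mono {s n : ℕ} {G H : HGraph s} (hSub : H.Sub G)
    {E : Finset (Finset (Fin n))} (h : ContainsCopy Finset.univ E G) :
    ContainsCopy Finset.univ E H := by
  obtain ⟨f, hinj, hmem, hedges⟩ := h
  exact ⟨f, hinj.mono (Finset.coe_subset.mpr hSub.1), fun v _ => Finset.mem_univ _,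
    fun e he => hedges e (hSub.2 he)⟩

theorem part1 (s : ℕ) (hs : 2 ≤ s) (G : HGraph s) (hG : G.edges.Nonempty)
    (p : ℕ → ℝ) (hp : ∀ n, 0 ≤ p n ∧ p n ≤ 1)
    (h0 : Tendsto (fun n : ℕ => p n * (n : ℝ) ^ (1 / HGraph.rhoMax G)) atTop (nhds 0)) :
    Tendsto (fun n : ℕ => pr s n (p n) (fun E => ContainsCopy Finset.univ E G))
      atTop (nhds 0) := by
  have hs1 : 1 ≤ s := by omega
  have hGv : G.verts.Nonempty := verts_nonempty_of_edges hs1 hG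
  obtain ⟨H, hSub, hHne, hrho⟩ := exists_rhoMax G hGv
  have hρ : 0 < HGraph.rhoMax G := rhoMax_pos hs1 hG
  have hHe : H.edges.Nonempty := edges_nonempty_of_rho_pos (hrho ▸ hρ)
  set e := H.edges.card with he_def
  set v := H.verts.card with hv_def
  have he1 : 1 ≤ e := Finset.card_pos.mpr hHe
  have hv1 : 1 ≤ v := Finset.card_pos.mpr hHne
  have key : ∀ n : ℕ, (n : ℝ) ^ v * (p n) ^ e
      = (p n * (n : ℝ) ^ (1 / HGraph.rhoMax G)) ^ e := by
    intro n
    have hn0 : (0:ℝ) ≤ (n:ℝ) := Nat.cast_nonneg n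
    rw [mul_pow, ← Real.rpow_natCast ((n:ℝ) ^ (1 / HGraph.rhoMax G)) e,
      ← Real.rpow_natCast (n:ℝ) v, ← Real.rpow_mul hn0]
    have harn : 1 / HGraph.rhoMax G * (e : ℝ) = (v : ℝ) := by
      rw [← hrho]
      unfold HGraph.rho
      rw [← he_def, ← hv_def]
      have he0 : (e : ℝ) ≠ 0 := by positivity
      have hv0 : (v : ℝ) ≠ 0 := by positivity
      field_simp
    rw [harn]
    ring
  have hbound : ∀ n : ℕ, pr s n (p n) (fun E => ContainsCopy Finset.univ E G)
      ≤ (p n * (n : ℝ) ^ (1 / HGraph.rhoMax G)) ^ e := by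
    intro n
    rw [← key n]
    calc pr s n (p n) (fun E => ContainsCopy Finset.univ E G)
        ≤ pr s n (p n) (fun E => ContainsCopy Finset.univ E H) :=
          pr_mono (hp n).1 (hp n).2 (fun E => containsCopy_mono hSub)
      _ ≤ (n : ℝ) ^ v * (p n) ^ e := pr_contains_le (hp n).1 (hp n).2 H hHne
  have hlim : Tendsto (fun n : ℕ => (p n * (n : ℝ) ^ (1 / HGraph.rhoMax G)) ^ e)
      atTop (nhds 0) := by
    have := h0.pow e
    rwa [zero_pow (by omega)] at this
  exact squeeze_zero (fun n => pr_nonneg (hp n).1 (hp n).2 _) hbound hlim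

section SecondMoment

variable {s : ℕ}

open scoped Classical in
/-- Injective labelings of `G`'s vertices in `Fin n`. -/
noncomputable def injFuns (G : HGraph s) (n : ℕ) : Finset ({x // x ∈ G.verts} → Fin n) :=
  Finset.univ.filter Function.Injective

open scoped Classical in
/-- The number of (labeled) copies of `G` in `E`. -/
noncomputable def Xcount (G : HGraph s) (hGv : G.verts.Nonempty) (n : ℕ)
    (E : Finset (Finset (Fin n))) : ℕ :=
  ((injFuns G n).filter (fun f0 => edgeImg G hGv f0 ⊆ E)).card

open scoped Classical in
theorem momentA (G : HGraph s) (hGv : G.verts.Nonempty) (n : ℕ) {p : ℝ}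
    (hp0 : 0 ≤ p) (hp1 : p ≤ 1) :
    ∑ E ∈ (cands s n).powerset, weight s n p E * (Xcount G hGv n E : ℝ)
      = ((injFuns G n).card : ℝ) * p ^ G.edges.card := by
  have hX : ∀ E, (Xcount G hGv n E : ℝ)
      = ∑ f0 ∈ injFuns G n, (if edgeImg G hGv f0 ⊆ E then (1:ℝ) else 0) := by
    intro E
    rw [Xcount, Finset.card_filter]
    push_cast
    rfl
  calc ∑ E ∈ (cands s n).powerset, weight s n p E * (Xcount G hGv n E : ℝ)
      = ∑ E ∈ (cands s n).powerset, ∑ f0 ∈ injFuns G n,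
          weight s n p E * (if edgeImg G hGv f0 ⊆ E then (1:ℝ) else 0) := by
        apply Finset.sum_congr rfl
        intro E _
        rw [hX, Finset.mul_sum]
    _ = ∑ f0 ∈ injFuns G n, ∑ E ∈ (cands s n).powerset,
          weight s n p E * (if edgeImg G hGv f0 ⊆ E then (1:ℝ) else 0) :=
        Finset.sum_comm
    _ = ∑ f0 ∈ injFuns G n, pr s n p (fun E => edgeImg G hGv f0 ⊆ E) := by
        apply Finset.sum_congr rfl
        intro f0 _
        rw [pr_eq_sum_filter, Finset.sum_filter]
        apply Finset.sum_congr rfl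
        intro E _
        by_cases h : edgeImg G hGv f0 ⊆ E <;> simp [h]
    _ = ∑ f0 ∈ injFuns G n, p ^ G.edges.card := by
        apply Finset.sum_congr rfl
        intro f0 hf0
        have hinj := (Finset.mem_filter.mp hf0).2
        rw [pr_superset (edgeImg_subset_cands hGv hinj), card_edgeImg hGv hinj]
    _ = ((injFuns G n).card : ℝ) * p ^ G.edges.card := by
        rw [Finset.sum_const, nsmul_eq_mul]

open scoped Classical in
theorem momentB (G : HGraph s) (hGv : G.verts.Nonempty) (n : ℕ) {p : ℝ}
    (hp0 : 0 ≤ p) (hp1 : p ≤ 1) :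
    ∑ E ∈ (cands s n).powerset, weight s n p E * (Xcount G hGv n E : ℝ) ^ 2
      = ∑ q ∈ (injFuns G n) ×ˢ (injFuns G n),
          p ^ (edgeImg G hGv q.1 ∪ edgeImg G hGv q.2).card := by
  have hX : ∀ E, (Xcount G hGv n E : ℝ) ^ 2
      = ∑ q ∈ (injFuns G n) ×ˢ (injFuns G n),
          (if edgeImg G hGv q.1 ∪ edgeImg G hGv q.2 ⊆ E then (1:ℝ) else 0) := by
    intro E
    have h1 : (Xcount G hGv n E : ℝ)
        = ∑ f0 ∈ injFuns G n, (if edgeImg G hGv f0 ⊆ E then (1:ℝ) else 0) := by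
      rw [Xcount, Finset.card_filter]; push_cast; rfl
    rw [sq, h1, Finset.sum_mul_sum, Finset.sum_product]
    apply Finset.sum_congr rfl
    intro f0 _
    apply Finset.sum_congr rfl
    intro g0 _
    by_cases h1 : edgeImg G hGv f0 ⊆ E <;> by_cases h2 : edgeImg G hGv g0 ⊆ E <;>
      simp [h1, h2, Finset.union_subset_iff]
  calc ∑ E ∈ (cands s n).powerset, weight s n p E * (Xcount G hGv n E : ℝ) ^ 2
      = ∑ E ∈ (cands s n).powerset, ∑ q ∈ (injFuns G n) ×ˢ (injFuns G n),
          weight s n p E *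
            (if edgeImg G hGv q.1 ∪ edgeImg G hGv q.2 ⊆ E then (1:ℝ) else 0) := by
        apply Finset.sum_congr rfl
        intro E _
        rw [hX, Finset.mul_sum]
    _ = ∑ q ∈ (injFuns G n) ×ˢ (injFuns G n), ∑ E ∈ (cands s n).powerset,
          weight s n p E *
            (if edgeImg G hGv q.1 ∪ edgeImg G hGv q.2 ⊆ E then (1:ℝ) else 0) :=
        Finset.sum_comm
    _ = ∑ q ∈ (injFuns G n) ×ˢ (injFuns G n),
          pr s n p (fun E => edgeImg G hGv q.1 ∪ edgeImg G hGv q.2 ⊆ E) := by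
        apply Finset.sum_congr rfl
        intro q _
        rw [pr_eq_sum_filter, Finset.sum_filter]
        apply Finset.sum_congr rfl
        intro E _
        by_cases h : edgeImg G hGv q.1 ∪ edgeImg G hGv q.2 ⊆ E <;> simp [h]
    _ = _ := by
        apply Finset.sum_congr rfl
        intro q hq
        rw [Finset.mem_product] at hq
        have h1 := (Finset.mem_filter.mp hq.1).2
        have h2 := (Finset.mem_filter.mp hq.2).2
        exact pr_superset (Finset.union_subset (edgeImg_subset_cands hGv h1)
          (edgeImg_subset_cands hGv h2))

open scoped Classical in
/-- Chebyshev-type bound. -/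
theorem chebyshev (G : HGraph s) (hGv : G.verts.Nonempty) (n : ℕ) {p : ℝ}
    (hp0 : 0 ≤ p) (hp1 : p ≤ 1)
    (hμ : 0 < ((injFuns G n).card : ℝ) * p ^ G.edges.card) :
    pr s n p (fun E => ¬ ContainsCopy Finset.univ E G)
      ≤ ((∑ q ∈ (injFuns G n) ×ˢ (injFuns G n),
            p ^ (edgeImg G hGv q.1 ∪ edgeImg G hGv q.2).card)
          - (((injFuns G n).card : ℝ) * p ^ G.edges.card) ^ 2)
        / (((injFuns G n).card : ℝ) * p ^ G.edges.card) ^ 2 := by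
  set μ := ((injFuns G n).card : ℝ) * p ^ G.edges.card with hμdef
  have hstep : pr s n p (fun E => ¬ ContainsCopy Finset.univ E G)
      ≤ ∑ E ∈ (cands s n).powerset,
          weight s n p E * (((Xcount G hGv n E : ℝ) - μ) / μ) ^ 2 := by
    rw [pr_eq_sum_filter]
    rw [Finset.sum_filter]
    apply Finset.sum_le_sum
    intro E _
    by_cases h : ContainsCopy Finset.univ E G
    · simp only [h, not_true_eq_false, if_false]
      have := weight_nonneg (s := s) (n := n) (p := p) hp0 hp1 E
      positivity
    · simp only [h, not_false_eq_true, if_true]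
      have hX0 : Xcount G hGv n E = 0 := by
        rw [Xcount, Finset.card_eq_zero, Finset.filter_eq_empty_iff]
        intro f0 hf0
        intro hsub
        exact h ((containsCopy_iff G hGv E).mpr ⟨f0, (Finset.mem_filter.mp hf0).2, hsub⟩)
      rw [hX0]
      have : ((0:ℕ):ℝ) = 0 := by norm_num
      rw [this, zero_sub, neg_div, neg_sq, div_pow, div_self (by positivity)]
      rw [mul_one]
  refine le_trans hstep (le_of_eq ?_)
  have hexp : ∀ E, weight s n p E * (((Xcount G hGv n E : ℝ) - μ) / μ) ^ 2
      = (weight s n p E * (Xcount G hGv n E : ℝ) ^ 2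
          - 2 * μ * (weight s n p E * (Xcount G hGv n E : ℝ))
          + μ ^ 2 * weight s n p E) / μ ^ 2 := by
    intro E
    field_simp
    ring
  rw [Finset.sum_congr rfl (fun E _ => hexp E), ← Finset.sum_div]
  rw [Finset.sum_add_distrib, Finset.sum_sub_distrib, ← Finset.mul_sum, ← Finset.mul_sum,
    momentA G hGv n hp0 hp1, momentB G hGv n hp0 hp1, ← hμdef,
    sum_weight_eq_one hp0 hp1]
  ring

end SecondMoment

section Counting

variable {s n : ℕ}

open scoped Classical in
/-- The set of edges of `G` shared (after embedding) between the copies `f0` and `g0`. -/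
noncomputable def sharedD (G : HGraph s) (hGv : G.verts.Nonempty)
    (f0 g0 : {x // x ∈ G.verts} → Fin n) : Finset (Finset ℕ) :=
  G.edges.filter (fun a => a.image (extf G hGv f0) ∈ edgeImg G hGv g0)

theorem sharedD_subset (G : HGraph s) (hGv : G.verts.Nonempty)
    (f0 g0 : {x // x ∈ G.verts} → Fin n) : sharedD G hGv f0 g0 ⊆ G.edges :=
  Finset.filter_subset _ _

open scoped Classical in
theorem inter_eq_image_sharedD (G : HGraph s) (hGv : G.verts.Nonempty)
    (f0 g0 : {x // x ∈ G.verts} → Fin n) :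
    edgeImg G hGv f0 ∩ edgeImg G hGv g0
      = (sharedD G hGv f0 g0).image (fun a => a.image (extf G hGv f0)) := by
  ext b
  constructor
  · intro hb
    rw [Finset.mem_inter] at hb
    obtain ⟨a, ha, rfl⟩ := Finset.mem_image.mp hb.1
    exact Finset.mem_image.mpr ⟨a, Finset.mem_filter.mpr ⟨ha, hb.2⟩, rfl⟩
  · intro hb
    obtain ⟨a, haD, rfl⟩ := Finset.mem_image.mp hb
    have h := Finset.mem_filter.mp haD
    exact Finset.mem_inter.mpr ⟨Finset.mem_image_of_mem _ h.1, h.2⟩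

theorem card_inter_sharedD (G : HGraph s) (hGv : G.verts.Nonempty)
    {f0 g0 : {x // x ∈ G.verts} → Fin n} (hf0 : Function.Injective f0) :
    (edgeImg G hGv f0 ∩ edgeImg G hGv g0).card = (sharedD G hGv f0 g0).card := by
  rw [inter_eq_image_sharedD]
  apply Finset.card_image_of_injOn
  intro e1 h1 e2 h2 h
  exact image_injOn_subsets (injOn_extf hf0)
    (G.edge_sub e1 (sharedD_subset G hGv f0 g0 h1))
    (G.edge_sub e2 (sharedD_subset G hGv f0 g0 h2)) h

theorem card_union_edgeImg (G : HGraph s) (hGv : G.verts.Nonempty)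
    {f0 g0 : {x // x ∈ G.verts} → Fin n} (hf0 : Function.Injective f0)
    (hg0 : Function.Injective g0) :
    (edgeImg G hGv f0 ∪ edgeImg G hGv g0).card
      = 2 * G.edges.card - (sharedD G hGv f0 g0).card := by
  have h1 := Finset.card_union_add_card_inter (edgeImg G hGv f0) (edgeImg G hGv g0)
  rw [card_inter_sharedD G hGv hf0, card_edgeImg hGv hf0, card_edgeImg hGv hg0] at h1
  have h2 : (sharedD G hGv f0 g0).card ≤ G.edges.card :=
    Finset.card_le_card (sharedD_subset G hGv f0 g0)
  omega

theorem sharedD_card_le (G : HGraph s) (hGv : G.verts.Nonempty)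
    (f0 g0 : {x // x ∈ G.verts} → Fin n) :
    (sharedD G hGv f0 g0).card ≤ G.edges.card :=
  Finset.card_le_card (sharedD_subset G hGv f0 g0)

theorem biUnion_subset_verts (G : HGraph s) {D : Finset (Finset ℕ)} (hD : D ⊆ G.edges) :
    D.biUnion id ⊆ G.verts := by
  intro x hx
  obtain ⟨a, ha, hxa⟩ := Finset.mem_biUnion.mp hx
  exact G.edge_sub a (hD ha) hxa

open scoped Classical in
/-- Key constraint: if the shared pattern contains `D`, then `f0` maps the support of `D`
into the image of `g0`. -/
theorem sharedD_constraint (G : HGraph s) (hGv : G.verts.Nonempty)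
    {f0 g0 : {x // x ∈ G.verts} → Fin n} {D : Finset (Finset ℕ)}
    (h : sharedD G hGv f0 g0 = D) (x : {x // x ∈ G.verts}) (hx : x.1 ∈ D.biUnion id) :
    f0 x ∈ Finset.univ.image g0 := by
  obtain ⟨a, ha, hxa⟩ := Finset.mem_biUnion.mp hx
  rw [← h] at ha
  have hmem := (Finset.mem_filter.mp ha).2
  obtain ⟨b, hb, heq⟩ := Finset.mem_image.mp hmem
  have h1 : extf G hGv f0 x.1 ∈ a.image (extf G hGv f0) := Finset.mem_image_of_mem _ hxa
  rw [← heq] at h1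
  obtain ⟨y, hy, hyx⟩ := Finset.mem_image.mp h1
  have hyv : y ∈ G.verts := G.edge_sub b hb hy
  rw [extf_mem G hGv g0 hyv] at hyx
  rw [extf_mem G hGv f0 x.2] at hyx
  rw [← hyx]
  exact Finset.mem_image_of_mem g0 (Finset.mem_univ _)

open scoped Classical in
theorem cnt_bound (G : HGraph s) (hGv : G.verts.Nonempty) {D : Finset (Finset ℕ)}
    (hDsub : D ⊆ G.edges)
    (Q : Finset (({x // x ∈ G.verts} → Fin n) × ({x // x ∈ G.verts} → Fin n)))
    (hQ : ∀ q ∈ Q, sharedD G hGv q.1 q.2 = D) :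
    Q.card ≤ n ^ G.verts.card *
      (G.verts.card ^ (D.biUnion id).card * n ^ (G.verts.card - (D.biUnion id).card)) := by
  classical
  set S := D.biUnion id with hSdef
  have hSsub : S ⊆ G.verts := biUnion_subset_verts G hDsub
  -- fiber over the second coordinate
  rw [Finset.card_eq_sum_card_fiberwise
    (f := fun q => q.2) (t := (Finset.univ : Finset ({x // x ∈ G.verts} → Fin n)))
    (fun q _ => Finset.mem_univ _)]
  have hfiber : ∀ g0 : {x // x ∈ G.verts} → Fin n,
      (Q.filter (fun q => q.2 = g0)).card
        ≤ G.verts.card ^ S.card * n ^ (G.verts.card - S.card) := by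
    intro g0
    have hinj : Set.InjOn
        (fun q : ({x // x ∈ G.verts} → Fin n) × ({x // x ∈ G.verts} → Fin n) => q.1)
        ↑(Q.filter (fun q => q.2 = g0)) := by
      intro q1 h1 q2 h2 h
      simp only [Finset.coe_filter, Set.mem_setOf_eq] at h1 h2
      exact Prod.ext h (h1.2.trans h2.2.symm)
    have hmaps : ∀ q ∈ Q.filter (fun q => q.2 = g0),
        q.1 ∈ Fintype.piFinset (fun x : {x // x ∈ G.verts} =>
          if x.1 ∈ S then Finset.univ.image g0 else Finset.univ) := by
      intro q hq
      rw [Finset.mem_filter] at hq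
      rw [Fintype.mem_piFinset]
      intro x
      by_cases hx : x.1 ∈ S
      · rw [if_pos hx]
        have := sharedD_constraint G hGv (hQ q hq.1) x hx
        rwa [hq.2] at this
      · rw [if_neg hx]
        exact Finset.mem_univ _
    calc (Q.filter (fun q => q.2 = g0)).card
        ≤ (Fintype.piFinset (fun x : {x // x ∈ G.verts} =>
            if x.1 ∈ S then Finset.univ.image g0 else Finset.univ)).card :=
          Finset.card_le_card_of_injOn _ hmaps hinj
      _ ≤ G.verts.card ^ S.card * n ^ (G.verts.card - S.card) := by
          rw [Fintype.card_piFinset]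
          have hle : ∀ x : {x // x ∈ G.verts},
              (if x.1 ∈ S then Finset.univ.image g0 else Finset.univ).card
                ≤ (if x.1 ∈ S then G.verts.card else n) := by
            intro x
            by_cases hx : x.1 ∈ S
            · simp only [if_pos hx]
              calc (Finset.univ.image g0).card
                  ≤ (Finset.univ : Finset ({x // x ∈ G.verts})).card := Finset.card_image_le
                _ = G.verts.card := by rw [Finset.card_univ, Fintype.card_coe]
            · simp only [if_neg hx]
              rw [Finset.card_univ, Fintype.card_fin]
          calc ∏ x : {x // x ∈ G.verts},
              (if x.1 ∈ S then Finset.univ.image g0 else Finset.univ).card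
              ≤ ∏ x : {x // x ∈ G.verts}, (if x.1 ∈ S then G.verts.card else n) :=
                Finset.prod_le_prod' (fun x _ => hle x)
            _ = G.verts.card ^ S.card * n ^ (G.verts.card - S.card) := by
                rw [Finset.prod_ite (f := fun _ => G.verts.card) (g := fun _ => n)]
                rw [Finset.prod_const, Finset.prod_const]
                congr 1
                · congr 1
                  -- card of filter = S.card
                  apply Finset.card_bij (fun x _ => x.1)
                  · intro x hx
                    exact (Finset.mem_filter.mp hx).2
                  · intro x1 h1 x2 h2 h
                    exact Subtype.ext h
                  · intro y hy
                    exact ⟨⟨y, hSsub hy⟩, Finset.mem_filter.mpr ⟨Finset.mem_univ _, hy⟩, rfl⟩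
                · congr 1
                  have h1 := Finset.card_filter_add_card_filter_not
                    (s := (Finset.univ : Finset ({x // x ∈ G.verts})))
                    (p := fun x => x.1 ∈ S)
                  have h2 : (Finset.univ.filter (fun x : {x // x ∈ G.verts} => x.1 ∈ S)).card
                      = S.card := by
                    apply Finset.card_bij (fun x _ => x.1)
                    · intro x hx
                      exact (Finset.mem_filter.mp hx).2
                    · intro x1 h1 x2 h2 h
                      exact Subtype.ext h
                    · intro y hy
                      exact ⟨⟨y, hSsub hy⟩, Finset.mem_filter.mpr ⟨Finset.mem_univ _, hy⟩, rfl⟩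
                  rw [Finset.card_univ, Fintype.card_coe] at h1
                  omega
  calc ∑ g0 ∈ (Finset.univ : Finset ({x // x ∈ G.verts} → Fin n)),
        (Q.filter (fun q => q.2 = g0)).card
      ≤ ∑ g0 ∈ (Finset.univ : Finset ({x // x ∈ G.verts} → Fin n)),
          G.verts.card ^ S.card * n ^ (G.verts.card - S.card) :=
        Finset.sum_le_sum (fun g0 _ => hfiber g0)
    _ = n ^ G.verts.card *
          (G.verts.card ^ S.card * n ^ (G.verts.card - S.card)) := by
        rw [Finset.sum_const, smul_eq_mul, Finset.card_univ, Fintype.card_fun,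
          Fintype.card_fin, Fintype.card_coe]

theorem rho_constraint (hs : 1 ≤ s) (G : HGraph s) {D : Finset (Finset ℕ)}
    (hDsub : D ⊆ G.edges) (hD : D.Nonempty) :
    (D.card : ℝ) ≤ HGraph.rhoMax G * ((D.biUnion id).card : ℝ) := by
  set S := D.biUnion id with hSdef
  have hedge_sub : ∀ e ∈ D, e ⊆ S := by
    intro e he x hx
    exact Finset.mem_biUnion.mpr ⟨e, he, hx⟩
  let HD : HGraph s := ⟨S, D, hedge_sub, fun e he => G.edge_card e (hDsub he)⟩
  have hSne : S.Nonempty := by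
    obtain ⟨a, ha⟩ := hD
    have : a.Nonempty := Finset.card_pos.mp (by rw [G.edge_card a (hDsub ha)]; omega)
    obtain ⟨x, hx⟩ := this
    exact ⟨x, hedge_sub a ha hx⟩
  have hSub : HD.Sub G := ⟨biUnion_subset_verts G hDsub, hDsub⟩
  have hrho := rho_le_rhoMax hSub hSne
  have hSpos : (0:ℝ) < (S.card : ℝ) := by exact_mod_cast Finset.card_pos.mpr hSne
  rw [HGraph.rho] at hrho
  calc (D.card : ℝ) = (D.card : ℝ) / (S.card : ℝ) * (S.card : ℝ) := by field_simp
    _ ≤ HGraph.rhoMax G * (S.card : ℝ) :=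
        mul_le_mul_of_nonneg_right hrho (le_of_lt hSpos)

end Counting

section VarBound

variable {s : ℕ}

open scoped Classical in
theorem var_upper (G : HGraph s) (hGv : G.verts.Nonempty) (n : ℕ) {p : ℝ}
    (hp0 : 0 ≤ p) (hp1 : p ≤ 1) :
    (∑ q ∈ (injFuns G n) ×ˢ (injFuns G n),
        p ^ (edgeImg G hGv q.1 ∪ edgeImg G hGv q.2).card)
      - (((injFuns G n).card : ℝ) * p ^ G.edges.card) ^ 2
    ≤ ∑ D ∈ G.edges.powerset.filter (fun D => D.Nonempty),
        (((((injFuns G n) ×ˢ (injFuns G n)).filter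
            (fun q => (sharedD G hGv q.1 q.2).Nonempty)).filter
              (fun q => sharedD G hGv q.1 q.2 = D)).card : ℝ)
          * p ^ (2 * G.edges.card - D.card) := by
  classical
  set II := injFuns G n with hII
  have hμ2 : (((II).card : ℝ) * p ^ G.edges.card) ^ 2
      = ∑ _q ∈ II ×ˢ II, p ^ (2 * G.edges.card) := by
    rw [Finset.sum_const, Finset.card_product, nsmul_eq_mul]
    push_cast
    rw [two_mul, pow_add]
    ring
  rw [hμ2, ← Finset.sum_sub_distrib]
  have hpoint : ∀ q ∈ II ×ˢ II,
      p ^ (edgeImg G hGv q.1 ∪ edgeImg G hGv q.2).card - p ^ (2 * G.edges.card)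
        ≤ if (sharedD G hGv q.1 q.2).Nonempty
            then p ^ (2 * G.edges.card - (sharedD G hGv q.1 q.2).card) else 0 := by
    intro q hq
    rw [Finset.mem_product] at hq
    have h1 := (Finset.mem_filter.mp hq.1).2
    have h2 := (Finset.mem_filter.mp hq.2).2
    rw [card_union_edgeImg G hGv h1 h2]
    by_cases hne : (sharedD G hGv q.1 q.2).Nonempty
    · rw [if_pos hne]
      have : (0:ℝ) ≤ p ^ (2 * G.edges.card) := pow_nonneg hp0 _
      linarith
    · rw [if_neg hne]
      rw [Finset.not_nonempty_iff_eq_empty] at hne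
      rw [hne]
      simp
  refine le_trans (Finset.sum_le_sum hpoint) (le_of_eq ?_)
  rw [Finset.sum_ite, Finset.sum_const, Finset.sum_filter]
  simp only [smul_zero, add_zero]
  rw [← Finset.sum_filter]
  rw [← Finset.sum_fiberwise_of_maps_to
    (g := fun q => sharedD G hGv q.1 q.2)
    (t := G.edges.powerset.filter (fun D => D.Nonempty))
    (fun q hq => by
      rw [Finset.mem_filter] at hq
      rw [Finset.mem_filter, Finset.mem_powerset]
      exact ⟨sharedD_subset G hGv q.1 q.2, hq.2⟩)]
  apply Finset.sum_congr rfl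
  intro D hD
  rw [Finset.mem_filter] at hD
  have : ∀ q ∈ ((II ×ˢ II).filter
      (fun q => (sharedD G hGv q.1 q.2).Nonempty)).filter
        (fun q => sharedD G hGv q.1 q.2 = D),
      p ^ (2 * G.edges.card - (sharedD G hGv q.1 q.2).card)
        = p ^ (2 * G.edges.card - D.card) := by
    intro q hq
    rw [(Finset.mem_filter.mp hq).2]
  rw [Finset.sum_congr rfl this, Finset.sum_const, nsmul_eq_mul]

end VarBound

section MainEst

variable {s : ℕ}

theorem injFuns_card_eq (G : HGraph s) (n : ℕ) :
    (injFuns G n).card = n.descFactorial G.verts.card := by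
  classical
  rw [injFuns]
  rw [← Fintype.card_subtype]
  rw [Fintype.card_congr (Equiv.subtypeInjectiveEquivEmbedding _ _)]
  rw [Fintype.card_embedding_eq, Fintype.card_fin, Fintype.card_coe]

theorem descFactorial_lower (n v : ℕ) : (n - v) ^ v ≤ n.descFactorial v := by
  rw [Nat.descFactorial_eq_prod_range]
  calc (n - v) ^ v = ∏ _i ∈ Finset.range v, (n - v) := by rw [Finset.prod_const,
        Finset.card_range]
    _ ≤ ∏ i ∈ Finset.range v, (n - i) := Finset.prod_le_prod' (fun i hi =>
        Nat.sub_le_sub_left (le_of_lt (Finset.mem_range.mp hi)) n)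

open scoped Classical in
theorem main_est (hs : 2 ≤ s) (G : HGraph s) (hG : G.edges.Nonempty) {n : ℕ} {p : ℝ}
    (hp0 : 0 ≤ p) (hp1 : p ≤ 1) (hn1 : 1 ≤ n) (hn : 2 * G.verts.card ≤ n)
    (ht1 : 1 ≤ p * (n : ℝ) ^ (1 / HGraph.rhoMax G)) :
    pr s n p (fun E => ¬ ContainsCopy Finset.univ E G)
      ≤ (2:ℝ) ^ G.edges.card * 4 ^ G.verts.card * (G.verts.card : ℝ) ^ G.verts.card
          / (p * (n : ℝ) ^ (1 / HGraph.rhoMax G)) := by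
  have hs1 : 1 ≤ s := by omega
  have hGv : G.verts.Nonempty := verts_nonempty_of_edges hs1 hG
  have hv1 : 1 ≤ G.verts.card := Finset.card_pos.mpr hGv
  have he1 : 1 ≤ G.edges.card := Finset.card_pos.mpr hG
  have hρ : 0 < HGraph.rhoMax G := rhoMax_pos hs1 hG
  have hnR : (1:ℝ) ≤ (n:ℝ) := by exact_mod_cast hn1
  have hnpos : (0:ℝ) < (n:ℝ) := by linarith
  have htpos : (0:ℝ) < p * (n : ℝ) ^ (1 / HGraph.rhoMax G) := lt_of_lt_of_le one_pos ht1
  have hppos : (0:ℝ) < p := by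
    rcases lt_or_ge 0 p with h | h
    · exact h
    · exfalso
      have hr : (0:ℝ) < (n:ℝ) ^ (1 / HGraph.rhoMax G) := Real.rpow_pos_of_pos hnpos _
      nlinarith
  have hNlow : ((n:ℝ)/2) ^ G.verts.card ≤ ((injFuns G n).card :ℝ) := by
    have h1 : (n - G.verts.card) ^ G.verts.card ≤ (injFuns G n).card := by
      rw [injFuns_card_eq]
      exact descFactorial_lower n G.verts.card
    have h2 : ((n:ℝ)/2) ≤ ((n - G.verts.card : ℕ) : ℝ) := by
      have hvn : G.verts.card ≤ n := by omega
      rw [Nat.cast_sub hvn]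
      have hc : 2 * (G.verts.card:ℝ) ≤ (n:ℝ) := by exact_mod_cast hn
      linarith
    calc ((n:ℝ)/2) ^ G.verts.card ≤ (((n - G.verts.card : ℕ) : ℝ)) ^ G.verts.card :=
          pow_le_pow_left₀ (by positivity) h2 _
      _ = (((n - G.verts.card) ^ G.verts.card : ℕ) : ℝ) := by push_cast; ring
      _ ≤ _ := by exact_mod_cast h1
  have hNpos : (0:ℝ) < ((injFuns G n).card :ℝ) := lt_of_lt_of_le (by positivity) hNlow
  have hμpos : 0 < ((injFuns G n).card :ℝ) * p ^ G.edges.card := by positivity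
  have hμlow : ((n:ℝ)/2) ^ G.verts.card * p ^ G.edges.card
      ≤ ((injFuns G n).card :ℝ) * p ^ G.edges.card :=
    mul_le_mul_of_nonneg_right hNlow (by positivity)
  -- the bound for each pattern D
  have hterm : ∀ D ∈ G.edges.powerset.filter (fun D => D.Nonempty),
      (((((injFuns G n) ×ˢ (injFuns G n)).filter
          (fun q => (sharedD G hGv q.1 q.2).Nonempty)).filter
            (fun q => sharedD G hGv q.1 q.2 = D)).card : ℝ)
        * p ^ (2 * G.edges.card - D.card)
      ≤ (((injFuns G n).card :ℝ) * p ^ G.edges.card) ^ 2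
          * ((4:ℝ) ^ G.verts.card * (G.verts.card:ℝ) ^ G.verts.card)
          / (p * (n : ℝ) ^ (1 / HGraph.rhoMax G)) := by
    intro D hD
    rw [Finset.mem_filter, Finset.mem_powerset] at hD
    obtain ⟨hDsub, hDne⟩ := hD
    have heD1 : 1 ≤ D.card := Finset.card_pos.mpr hDne
    have heDe : D.card ≤ G.edges.card := Finset.card_le_card hDsub
    have hsDv : (D.biUnion id).card ≤ G.verts.card :=
      Finset.card_le_card (biUnion_subset_verts G hDsub)
    have hcnt := cnt_bound G hGv hDsub
      ((((injFuns G n) ×ˢ (injFuns G n)).filter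
          (fun q => (sharedD G hGv q.1 q.2).Nonempty)).filter
            (fun q => sharedD G hGv q.1 q.2 = D))
      (fun q hq => (Finset.mem_filter.mp hq).2)
    have hcntR : (((((injFuns G n) ×ˢ (injFuns G n)).filter
          (fun q => (sharedD G hGv q.1 q.2).Nonempty)).filter
            (fun q => sharedD G hGv q.1 q.2 = D)).card : ℝ)
        ≤ (n:ℝ) ^ G.verts.card * ((G.verts.card:ℝ) ^ (D.biUnion id).card
            * (n:ℝ) ^ (G.verts.card - (D.biUnion id).card)) := by
      calc _ ≤ ((n ^ G.verts.card * (G.verts.card ^ (D.biUnion id).card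
            * n ^ (G.verts.card - (D.biUnion id).card)) : ℕ) : ℝ) := by exact_mod_cast hcnt
        _ = _ := by push_cast; ring
    have hkey : p * (n : ℝ) ^ (1 / HGraph.rhoMax G)
        ≤ (n:ℝ) ^ (D.biUnion id).card * p ^ D.card := by
      have h1 : p * (n : ℝ) ^ (1 / HGraph.rhoMax G)
          ≤ (p * (n : ℝ) ^ (1 / HGraph.rhoMax G)) ^ D.card :=
        le_self_pow₀ ht1 (by omega)
      have h3 : ((n:ℝ) ^ (1 / HGraph.rhoMax G)) ^ D.card
          ≤ (n:ℝ) ^ (D.biUnion id).card := by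
        rw [← Real.rpow_natCast ((n:ℝ) ^ (1 / HGraph.rhoMax G)) D.card,
          ← Real.rpow_mul (le_of_lt hnpos)]
        have hexp : 1 / HGraph.rhoMax G * (D.card:ℝ) ≤ ((D.biUnion id).card:ℝ) := by
          have hrc := rho_constraint hs1 G hDsub hDne
          rw [div_mul_eq_mul_div, one_mul, div_le_iff₀ hρ]
          linarith
        calc (n:ℝ) ^ (1 / HGraph.rhoMax G * (D.card:ℝ))
            ≤ (n:ℝ) ^ (((D.biUnion id).card:ℝ)) :=
              Real.rpow_le_rpow_of_exponent_le hnR hexp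
          _ = (n:ℝ) ^ (D.biUnion id).card := Real.rpow_natCast _ _
      calc p * (n : ℝ) ^ (1 / HGraph.rhoMax G)
          ≤ (p * (n : ℝ) ^ (1 / HGraph.rhoMax G)) ^ D.card := h1
        _ = p ^ D.card * ((n:ℝ) ^ (1 / HGraph.rhoMax G)) ^ D.card := mul_pow _ _ _
        _ ≤ p ^ D.card * (n:ℝ) ^ (D.biUnion id).card :=
            mul_le_mul_of_nonneg_left h3 (by positivity)
        _ = (n:ℝ) ^ (D.biUnion id).card * p ^ D.card := mul_comm _ _
    -- main numeric chain
    rw [le_div_iff₀ htpos]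
    have step1 : (((((injFuns G n) ×ˢ (injFuns G n)).filter
          (fun q => (sharedD G hGv q.1 q.2).Nonempty)).filter
            (fun q => sharedD G hGv q.1 q.2 = D)).card : ℝ)
          * p ^ (2 * G.edges.card - D.card) * (p * (n : ℝ) ^ (1 / HGraph.rhoMax G))
        ≤ ((n:ℝ) ^ G.verts.card * ((G.verts.card:ℝ) ^ (D.biUnion id).card
            * (n:ℝ) ^ (G.verts.card - (D.biUnion id).card)))
          * p ^ (2 * G.edges.card - D.card)
          * ((n:ℝ) ^ (D.biUnion id).card * p ^ D.card) := by
      apply mul_le_mul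
      · exact mul_le_mul_of_nonneg_right hcntR (by positivity)
      · exact hkey
      · positivity
      · positivity
    refine le_trans step1 ?_
    have e1 : (n:ℝ) ^ (G.verts.card - (D.biUnion id).card) * (n:ℝ) ^ (D.biUnion id).card
        = (n:ℝ) ^ G.verts.card := by
      rw [← pow_add]
      congr 1
      omega
    have e2 : p ^ (2 * G.edges.card - D.card) * p ^ D.card = p ^ (2 * G.edges.card) := by
      rw [← pow_add]
      congr 1
      omega
    have step2 : ((n:ℝ) ^ G.verts.card * ((G.verts.card:ℝ) ^ (D.biUnion id).card
            * (n:ℝ) ^ (G.verts.card - (D.biUnion id).card)))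
          * p ^ (2 * G.edges.card - D.card)
          * ((n:ℝ) ^ (D.biUnion id).card * p ^ D.card)
        = (n:ℝ) ^ G.verts.card * (n:ℝ) ^ G.verts.card
            * (G.verts.card:ℝ) ^ (D.biUnion id).card * p ^ (2 * G.edges.card) := by
      rw [← e1, ← e2]
      ring
    rw [step2]
    have step3 : (n:ℝ) ^ G.verts.card * (n:ℝ) ^ G.verts.card
            * (G.verts.card:ℝ) ^ (D.biUnion id).card * p ^ (2 * G.edges.card)
        ≤ (n:ℝ) ^ G.verts.card * (n:ℝ) ^ G.verts.card
            * (G.verts.card:ℝ) ^ G.verts.card * p ^ (2 * G.edges.card) := by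
      have h : (G.verts.card:ℝ) ^ (D.biUnion id).card ≤ (G.verts.card:ℝ) ^ G.verts.card :=
        pow_le_pow_right₀ (by exact_mod_cast hv1) hsDv
      have hplus : (0:ℝ) ≤ (n:ℝ) ^ G.verts.card * (n:ℝ) ^ G.verts.card := by positivity
      have hpp : (0:ℝ) ≤ p ^ (2 * G.edges.card) := by positivity
      exact mul_le_mul_of_nonneg_right (mul_le_mul_of_nonneg_left h hplus) hpp
    refine le_trans step3 ?_
    -- μ² 4^v ≥ n^v n^v p^{2e}
    have step4 : (n:ℝ) ^ G.verts.card * (n:ℝ) ^ G.verts.card * p ^ (2 * G.edges.card)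
        ≤ (((injFuns G n).card :ℝ) * p ^ G.edges.card) ^ 2 * (4:ℝ) ^ G.verts.card := by
      have hsq : (((n:ℝ)/2) ^ G.verts.card * p ^ G.edges.card) ^ 2
          ≤ ((((injFuns G n)).card :ℝ) * p ^ G.edges.card) ^ 2 := by
        apply pow_le_pow_left₀ (by positivity) hμlow
      have hid : (((n:ℝ)/2) ^ G.verts.card * p ^ G.edges.card) ^ 2 * (4:ℝ) ^ G.verts.card
          = (n:ℝ) ^ G.verts.card * (n:ℝ) ^ G.verts.card * p ^ (2 * G.edges.card) := by
        calc (((n:ℝ)/2) ^ G.verts.card * p ^ G.edges.card) ^ 2 * (4:ℝ) ^ G.verts.card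
            = (((n:ℝ)/2) ^ G.verts.card) ^ 2 * (4:ℝ) ^ G.verts.card
                * (p ^ G.edges.card) ^ 2 := by ring
          _ = (((n:ℝ)/2) ^ 2) ^ G.verts.card * (4:ℝ) ^ G.verts.card
                * (p ^ G.edges.card) ^ 2 := by rw [pow_right_comm]
          _ = (((n:ℝ)/2) ^ 2 * 4) ^ G.verts.card * (p ^ G.edges.card) ^ 2 := by
              rw [mul_pow]
          _ = ((n:ℝ) ^ 2) ^ G.verts.card * (p ^ G.edges.card) ^ 2 := by
              rw [show ((n:ℝ)/2) ^ 2 * 4 = (n:ℝ) ^ 2 from by ring]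
          _ = (n:ℝ) ^ G.verts.card * (n:ℝ) ^ G.verts.card * p ^ (2 * G.edges.card) := by
              rw [← pow_mul, ← pow_mul, show 2 * G.verts.card = G.verts.card + G.verts.card
                from by ring, pow_add, show G.edges.card * 2 = 2 * G.edges.card from by ring]
      calc (n:ℝ) ^ G.verts.card * (n:ℝ) ^ G.verts.card * p ^ (2 * G.edges.card)
          = (((n:ℝ)/2) ^ G.verts.card * p ^ G.edges.card) ^ 2 * (4:ℝ) ^ G.verts.card :=
            hid.symm
        _ ≤ (((injFuns G n).card :ℝ) * p ^ G.edges.card) ^ 2 * (4:ℝ) ^ G.verts.card :=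
            mul_le_mul_of_nonneg_right hsq (by positivity)
    calc (n:ℝ) ^ G.verts.card * (n:ℝ) ^ G.verts.card
            * (G.verts.card:ℝ) ^ G.verts.card * p ^ (2 * G.edges.card)
        = ((n:ℝ) ^ G.verts.card * (n:ℝ) ^ G.verts.card * p ^ (2 * G.edges.card))
            * (G.verts.card:ℝ) ^ G.verts.card := by ring
      _ ≤ ((((injFuns G n).card :ℝ) * p ^ G.edges.card) ^ 2 * (4:ℝ) ^ G.verts.card)
            * (G.verts.card:ℝ) ^ G.verts.card := by
          apply mul_le_mul_of_nonneg_right step4 (by positivity)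
      _ = (((injFuns G n).card :ℝ) * p ^ G.edges.card) ^ 2
            * ((4:ℝ) ^ G.verts.card * (G.verts.card:ℝ) ^ G.verts.card) := by ring
  -- Assemble
  have hvar := var_upper G hGv n hp0 hp1
  have hcheby := chebyshev G hGv n hp0 hp1 hμpos
  have hsum : ∑ D ∈ G.edges.powerset.filter (fun D => D.Nonempty),
        (((((injFuns G n) ×ˢ (injFuns G n)).filter
            (fun q => (sharedD G hGv q.1 q.2).Nonempty)).filter
              (fun q => sharedD G hGv q.1 q.2 = D)).card : ℝ)
          * p ^ (2 * G.edges.card - D.card)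
      ≤ (2:ℝ) ^ G.edges.card * ((((injFuns G n).card :ℝ) * p ^ G.edges.card) ^ 2
          * ((4:ℝ) ^ G.verts.card * (G.verts.card:ℝ) ^ G.verts.card)
          / (p * (n : ℝ) ^ (1 / HGraph.rhoMax G))) := by
    calc _ ≤ ∑ _D ∈ G.edges.powerset.filter (fun D => D.Nonempty),
          ((((injFuns G n).card :ℝ) * p ^ G.edges.card) ^ 2
            * ((4:ℝ) ^ G.verts.card * (G.verts.card:ℝ) ^ G.verts.card)
            / (p * (n : ℝ) ^ (1 / HGraph.rhoMax G))) := Finset.sum_le_sum hterm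
      _ = ((G.edges.powerset.filter (fun D => D.Nonempty)).card : ℝ)
            * ((((injFuns G n).card :ℝ) * p ^ G.edges.card) ^ 2
            * ((4:ℝ) ^ G.verts.card * (G.verts.card:ℝ) ^ G.verts.card)
            / (p * (n : ℝ) ^ (1 / HGraph.rhoMax G))) := by
          rw [Finset.sum_const, nsmul_eq_mul]
      _ ≤ _ := by
          apply mul_le_mul_of_nonneg_right _ (by positivity)
          calc ((G.edges.powerset.filter (fun D => D.Nonempty)).card : ℝ)
              ≤ (G.edges.powerset.card : ℝ) := by
                exact_mod_cast Finset.card_filter_le _ _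
            _ = (2:ℝ) ^ G.edges.card := by
                rw [Finset.card_powerset]; push_cast; ring
  have hfinal := le_trans hcheby ((div_le_div_iff_of_pos_right (by positivity)).mpr
    (le_trans hvar hsum))
  refine le_trans hfinal (le_of_eq ?_)
  field_simp

end MainEst

theorem part2 (s : ℕ) (hs : 2 ≤ s) (G : HGraph s) (hG : G.edges.Nonempty)
    (p : ℕ → ℝ) (hp : ∀ n, 0 ≤ p n ∧ p n ≤ 1)
    (hInf : Tendsto (fun n : ℕ => p n * (n : ℝ) ^ (1 / HGraph.rhoMax G)) atTop atTop) :
    Tendsto (fun n : ℕ => pr s n (p n) (fun E => ContainsCopy Finset.univ E G))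
      atTop (nhds 1) := by
  set C := (2:ℝ) ^ G.edges.card * 4 ^ G.verts.card
    * (G.verts.card : ℝ) ^ G.verts.card with hC_def
  have hev : ∀ᶠ n : ℕ in atTop,
      pr s n (p n) (fun E => ¬ ContainsCopy Finset.univ E G)
        ≤ C / (p n * (n : ℝ) ^ (1 / HGraph.rhoMax G)) := by
    have h1 : ∀ᶠ n : ℕ in atTop, 1 ≤ p n * (n : ℝ) ^ (1 / HGraph.rhoMax G) :=
      hInf.eventually_ge_atTop 1
    have h2 : ∀ᶠ n : ℕ in atTop, max 1 (2 * G.verts.card) ≤ n :=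
      eventually_ge_atTop _
    filter_upwards [h1, h2] with n ht1 hn
    exact main_est hs G hG (hp n).1 (hp n).2 (le_trans (le_max_left _ _) hn)
      (le_trans (le_max_right _ _) hn) ht1
  have hCt : Tendsto (fun n : ℕ => C / (p n * (n : ℝ) ^ (1 / HGraph.rhoMax G)))
      atTop (nhds 0) := Tendsto.div_atTop tendsto_const_nhds hInf
  have hneg : Tendsto
      (fun n : ℕ => pr s n (p n) (fun E => ¬ ContainsCopy Finset.univ E G))
      atTop (nhds 0) :=
    squeeze_zero' (Filter.Eventually.of_forall fun n => pr_nonneg (hp n).1 (hp n).2 _)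
      hev hCt
  have hid : (fun n : ℕ => pr s n (p n) (fun E => ContainsCopy Finset.univ E G))
      = fun n : ℕ =>
        1 - pr s n (p n) (fun E => ¬ ContainsCopy Finset.univ E G) := by
    funext n
    have := pr_compl (s := s) (n := n) (hp n).1 (hp n).2
      (fun E : Finset (Finset (Fin n)) => ContainsCopy Finset.univ E G)
    linarith
  rw [hid]
  have h := Tendsto.sub (tendsto_const_nhds (α := ℕ) (x := (1:ℝ))
    (f := (atTop : Filter ℕ))) hneg
  simpa using h

theorem statement7' (s : ℕ) (hs : 2 ≤ s) (G : HGraph s) (hG : G.edges.Nonempty)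
    (p : ℕ → ℝ) (hp : ∀ n, 0 ≤ p n ∧ p n ≤ 1) :
    (Tendsto (fun n : ℕ => p n * (n : ℝ) ^ (1 / HGraph.rhoMax G)) atTop (nhds 0) →
      Tendsto (fun n : ℕ => pr s n (p n) (fun E => ContainsCopy Finset.univ E G))
        atTop (nhds 0)) ∧
    (Tendsto (fun n : ℕ => p n * (n : ℝ) ^ (1 / HGraph.rhoMax G)) atTop atTop →
      Tendsto (fun n : ℕ => pr s n (p n) (fun E => ContainsCopy Finset.univ E G))
        atTop (nhds 1)) :=
  ⟨part1 s hs G hG p hp, part2 s hs G hG p hp⟩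

/-- **Theorem 12.** `n^{-1/ρ^max(G)}` is a threshold for the property of containing a copy
of a fixed `s`-hypergraph `G` with at least one edge. -/
theorem statement7 (s : ℕ) (hs : 2 ≤ s) (G : HGraph s) (hG : G.edges.Nonempty)
    (p : ℕ → ℝ) (hp : ∀ n, 0 ≤ p n ∧ p n ≤ 1) :
    (Tendsto (fun n : ℕ => p n * (n : ℝ) ^ (1 / HGraph.rhoMax G)) atTop (nhds 0) →
      Tendsto (fun n : ℕ => pr s n (p n) (fun E => ContainsCopy Finset.univ E G))
        atTop (nhds 0)) ∧
    (Tendsto (fun n : ℕ => p n * (n : ℝ) ^ (1 / HGraph.rhoMax G)) atTop atTop →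
      Tendsto (fun n : ℕ => pr s n (p n) (fun E => ContainsCopy Finset.univ E G))
        atTop (nhds 1)) :=
  ⟨part1 s hs G hG p hp, part2 s hs G hG p hp⟩

end RandomHypergraph
end

section
/- Let s ≥ 3 and k ≥ s be integers, and let α > 0 satisfy 1/α > C(k−1, s−1), where C(a,b) denotes the binomial coefficient. Then with probability tending to 1 as n → ∞, the random s-uniform hypergraph G^s(n, n^{−α}) satisfies the full level (k−1) extension property. -/
open Filter Topology

namespace RandomHypergraph

variable {β : Type*} [DecidableEq β]

/-- Generalized probability: sum over subsets of `S` of indicator weights. -/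
noncomputable def prW (p : ℝ) (S : Finset β) (B : Finset β → Prop) : ℝ :=
  ∑ F ∈ S.powerset,
    Set.indicator {F' | B F'} (fun F => p ^ F.card * (1 - p) ^ (S.card - F.card)) F

lemma prW_eq_sum_ite (p : ℝ) (S : Finset β) (B : Finset β → Prop)
    [DecidablePred B] :
    prW p S B = ∑ F ∈ S.powerset,
      if B F then p ^ F.card * (1 - p) ^ (S.card - F.card) else 0 := by
  classical
  unfold prW
  refine Finset.sum_congr rfl fun F _ => ?_
  simp [Set.indicator_apply, Set.mem_setOf_eq]

lemma sum_weights (p : ℝ) (S : Finset β) :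
    ∑ F ∈ S.powerset, p ^ F.card * (1 - p) ^ (S.card - F.card) = 1 := by
  classical
  induction S using Finset.induction_on with
  | empty => simp
  | @insert a S ha ih =>
    rw [Finset.sum_powerset_insert ha]
    have h1 : ∑ F ∈ S.powerset, p ^ F.card * (1 - p) ^ ((insert a S).card - F.card)
        = (1 - p) * ∑ F ∈ S.powerset, p ^ F.card * (1 - p) ^ (S.card - F.card) := by
      rw [Finset.mul_sum]
      refine Finset.sum_congr rfl fun F hF => ?_
      rw [Finset.card_insert_of_notMem ha]
      have hle : F.card ≤ S.card := Finset.card_le_card (Finset.mem_powerset.1 hF)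
      rw [Nat.succ_sub hle, pow_succ]
      ring
    have h2 : ∑ F ∈ S.powerset, p ^ (insert a F).card *
          (1 - p) ^ ((insert a S).card - (insert a F).card)
        = p * ∑ F ∈ S.powerset, p ^ F.card * (1 - p) ^ (S.card - F.card) := by
      rw [Finset.mul_sum]
      refine Finset.sum_congr rfl fun F hF => ?_
      have haF : a ∉ F := fun h => ha (Finset.mem_powerset.1 hF h)
      rw [Finset.card_insert_of_notMem ha, Finset.card_insert_of_notMem haF,
        Nat.succ_sub_succ, pow_succ]
      ring
    rw [h1, h2, ih]
    ring

variable {p : ℝ} (hp0 : 0 ≤ p) (hp1 : p ≤ 1)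

lemma weight_nonneg_s17 (hp0 : 0 ≤ p) (hp1 : p ≤ 1) (S F : Finset β) :
    0 ≤ p ^ F.card * (1 - p) ^ (S.card - F.card) :=
  mul_nonneg (pow_nonneg hp0 _) (pow_nonneg (by linarith) _)

lemma prW_nonneg (hp0 : 0 ≤ p) (hp1 : p ≤ 1) (S : Finset β) (B : Finset β → Prop) :
    0 ≤ prW p S B := by
  classical
  rw [prW_eq_sum_ite]
  refine Finset.sum_nonneg fun F _ => ?_
  split
  · exact weight_nonneg_s17 hp0 hp1 S F
  · exact le_refl 0

lemma prW_mono (hp0 : 0 ≤ p) (hp1 : p ≤ 1) (S : Finset β) {B C : Finset β → Prop}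
    (h : ∀ F, B F → C F) : prW p S B ≤ prW p S C := by
  classical
  rw [prW_eq_sum_ite, prW_eq_sum_ite]
  refine Finset.sum_le_sum fun F _ => ?_
  by_cases hB : B F
  · rw [if_pos hB, if_pos (h F hB)]
  · rw [if_neg hB]
    split
    · exact weight_nonneg_s17 hp0 hp1 S F
    · exact le_refl 0

lemma prW_congr (S : Finset β) {B C : Finset β → Prop} (h : ∀ F, B F ↔ C F) :
    prW p S B = prW p S C := by
  classical
  rw [prW_eq_sum_ite, prW_eq_sum_ite]
  exact Finset.sum_congr rfl fun F _ => by rw [iff_iff_eq.1 (h F)]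

lemma prW_true (p : ℝ) (S : Finset β) : prW p S (fun _ => True) = 1 := by
  classical
  rw [prW_eq_sum_ite]
  simp only [if_true]
  exact sum_weights p S

lemma prW_false (p : ℝ) (S : Finset β) : prW p S (fun _ => False) = 0 := by
  classical
  rw [prW_eq_sum_ite]
  simp

lemma prW_add_not (p : ℝ) (S : Finset β) (B : Finset β → Prop) :
    prW p S B + prW p S (fun F => ¬ B F) = 1 := by
  classical
  rw [prW_eq_sum_ite, prW_eq_sum_ite, ← Finset.sum_add_distrib]
  conv_rhs => rw [← sum_weights p S]
  refine Finset.sum_congr rfl fun F _ => ?_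
  by_cases h : B F <;> simp [h]

lemma prW_union_bound {ι : Type*} (hp0 : 0 ≤ p) (hp1 : p ≤ 1) (S : Finset β)
    (T : Finset ι) (B : ι → Finset β → Prop) :
    prW p S (fun E => ∃ t ∈ T, B t E) ≤ ∑ t ∈ T, prW p S (B t) := by
  classical
  simp only [prW_eq_sum_ite]
  rw [Finset.sum_comm]
  refine Finset.sum_le_sum fun F _ => ?_
  by_cases h : ∃ t ∈ T, B t F
  · rw [if_pos h]
    obtain ⟨t, htT, htB⟩ := h
    calc p ^ F.card * (1 - p) ^ (S.card - F.card)
        = (if B t F then p ^ F.card * (1 - p) ^ (S.card - F.card) else 0) := by rw [if_pos htB]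
      _ ≤ _ := Finset.single_le_sum (f := fun t => if B t F then _ else 0)
          (fun i _ => by split
                         exacts [weight_nonneg_s17 hp0 hp1 S F, le_refl 0]) htT
  · rw [if_neg h]
    refine Finset.sum_nonneg fun i _ => ?_
    split; exacts [weight_nonneg_s17 hp0 hp1 S F, le_refl 0]

lemma prW_factor (p : ℝ) (S T : Finset β) (hd : Disjoint S T)
    (B C : Finset β → Prop) :
    prW p (S ∪ T) (fun E => B (E ∩ S) ∧ C (E ∩ T)) = prW p S B * prW p T C := by
  classical
  simp only [prW_eq_sum_ite]
  rw [Finset.sum_mul_sum]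
  rw [← Finset.sum_product']
  refine Finset.sum_nbij' (fun E => (E ∩ S, E ∩ T)) (fun P => P.1 ∪ P.2) ?_ ?_ ?_ ?_ ?_
  · intro E hE
    simp only [Finset.mem_product, Finset.mem_powerset]
    exact ⟨Finset.inter_subset_right, Finset.inter_subset_right⟩
  · intro P hP
    simp only [Finset.mem_product, Finset.mem_powerset] at hP ⊢
    exact Finset.union_subset_union hP.1 hP.2
  · intro E hE
    simp only [Finset.mem_powerset] at hE
    dsimp only
    rw [← Finset.inter_union_distrib_left, Finset.inter_eq_left.2 hE]
  · intro P hP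
    simp only [Finset.mem_product, Finset.mem_powerset] at hP
    obtain ⟨h1, h2⟩ := hP
    have e1 : (P.1 ∪ P.2) ∩ S = P.1 := by
      rw [Finset.union_inter_distrib_right, Finset.inter_eq_left.2 h1,
        Finset.disjoint_iff_inter_eq_empty.1 (hd.symm.mono_left h2), Finset.union_empty]
    have e2 : (P.1 ∪ P.2) ∩ T = P.2 := by
      rw [Finset.union_inter_distrib_right, Finset.inter_eq_left.2 h2,
        Finset.disjoint_iff_inter_eq_empty.1 (hd.mono_left h1), Finset.empty_union]
    rw [Prod.ext_iff]
    exact ⟨e1, e2⟩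
  · intro E hE
    simp only [Finset.mem_powerset] at hE
    have hES : E ∩ S ⊆ S := Finset.inter_subset_right
    have hET : E ∩ T ⊆ T := Finset.inter_subset_right
    have hcard : E.card = (E ∩ S).card + (E ∩ T).card := by
      rw [← Finset.card_union_of_disjoint (hd.mono hES hET),
        ← Finset.inter_union_distrib_left, Finset.inter_eq_left.2 hE]
    have hcardST : (S ∪ T).card = S.card + T.card := Finset.card_union_of_disjoint hd
    have hsub : (S ∪ T).card - E.card = (S.card - (E ∩ S).card) + (T.card - (E ∩ T).card) := by
      have l1 : (E ∩ S).card ≤ S.card := Finset.card_le_card hES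
      have l2 : (E ∩ T).card ≤ T.card := Finset.card_le_card hET
      rw [hcardST, hcard]
      omega
    dsimp only
    by_cases hB : B (E ∩ S) <;> by_cases hC : C (E ∩ T) <;>
      simp only [hB, hC, true_and, and_true, false_and, and_false, if_true, if_false,
        if_neg, mul_zero, zero_mul, if_pos]
    · rw [hsub, pow_add]
      conv_lhs => rw [hcard, pow_add]
      ring
    all_goals simp [hB, hC]

lemma prW_prod {ι : Type*} [DecidableEq ι] (p : ℝ) (U : Finset β) (W : Finset ι)
    (S : ι → Finset β) (B : ι → Finset β → Prop)
    (hsub : ∀ w ∈ W, S w ⊆ U)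
    (hdisj : ∀ w ∈ W, ∀ w' ∈ W, w ≠ w' → Disjoint (S w) (S w')) :
    prW p U (fun E => ∀ w ∈ W, B w (E ∩ S w)) = ∏ w ∈ W, prW p (S w) (B w) := by
  classical
  induction W using Finset.induction_on generalizing U with
  | empty =>
    simp only [Finset.notMem_empty, false_implies, implies_true, Finset.prod_empty]
    exact prW_true p U
  | @insert a W ha ih =>
    have hSa : S a ⊆ U := hsub a (Finset.mem_insert_self a W)
    have hUeq : S a ∪ (U \ S a) = U := Finset.union_sdiff_of_subset hSa
    have hdis : Disjoint (S a) (U \ S a) := Finset.disjoint_sdiff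
    have hsub' : ∀ w ∈ W, S w ⊆ U \ S a := by
      intro w hw
      refine Finset.subset_sdiff.2 ⟨hsub w (Finset.mem_insert_of_mem hw), ?_⟩
      exact (hdisj w (Finset.mem_insert_of_mem hw) a (Finset.mem_insert_self a W)
        (fun hne => ha (hne ▸ hw))).symm.symm
    have key : prW p U (fun E => ∀ w ∈ insert a W, B w (E ∩ S w))
        = prW p (S a ∪ (U \ S a))
          (fun E => B a (E ∩ S a) ∧ (fun F => ∀ w ∈ W, B w (F ∩ S w)) (E ∩ (U \ S a))) := by
      rw [hUeq]
      refine prW_congr U fun E => ?_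
      simp only [Finset.mem_insert, forall_eq_or_imp]
      constructor
      · rintro ⟨h1, h2⟩
        refine ⟨h1, fun w hw => ?_⟩
        rw [Finset.inter_assoc, Finset.inter_eq_right.2 (hsub' w hw)]
        exact h2 w hw
      · rintro ⟨h1, h2⟩
        refine ⟨h1, fun w hw => ?_⟩
        have := h2 w hw
        rwa [Finset.inter_assoc, Finset.inter_eq_right.2 (hsub' w hw)] at this
    rw [key, prW_factor p (S a) (U \ S a) hdis (B a) (fun F => ∀ w ∈ W, B w (F ∩ S w)), ih (U \ S a) hsub'
      (fun w hw w' hw' hne => hdisj w (Finset.mem_insert_of_mem hw) w'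
        (Finset.mem_insert_of_mem hw') hne),
      Finset.prod_insert ha]

lemma prW_eq_single (p : ℝ) (S F₀ : Finset β) (h : F₀ ⊆ S) :
    prW p S (fun F => F = F₀) = p ^ F₀.card * (1 - p) ^ (S.card - F₀.card) := by
  classical
  rw [prW_eq_sum_ite]
  rw [Finset.sum_eq_single_of_mem F₀ (Finset.mem_powerset.2 h)]
  · rw [if_pos rfl]
  · intro F _ hne
    rw [if_neg hne]

lemma prW_ne_single (p : ℝ) (S F₀ : Finset β) (h : F₀ ⊆ S) :
    prW p S (fun F => F ≠ F₀) = 1 - p ^ F₀.card * (1 - p) ^ (S.card - F₀.card) := by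
  have := prW_add_not p S (fun F => F = F₀)
  have h2 := prW_eq_single p S F₀ h
  have h3 : prW p S (fun F => F ≠ F₀) = prW p S (fun F => ¬ F = F₀) := rfl
  linarith

open Finset

set_option maxHeartbeats 2000000 in
lemma tuple_fail_bound (s k n : ℕ) (hs : 3 ≤ s) (hk : s ≤ k) (p : ℝ)
    (hp0 : 0 ≤ p) (hp2 : p ≤ 1/2) (r : ℕ) (hr : r ≤ k - 1)
    (z : Fin r → Fin n) (𝓐 : Finset (Finset (Fin r))) :
    prW p (cands s n) (fun E => Function.Injective z ∧ (∀ a ∈ 𝓐, a.card = s - 1) ∧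
      ¬ ∃ w ∈ (Finset.univ : Finset (Fin n)), (∀ i, w ≠ z i) ∧
        ∀ a : Finset (Fin r), a.card = s - 1 → (insert w (a.image z) ∈ E ↔ a ∈ 𝓐))
    ≤ (1 - p ^ ((k-1).choose (s-1))) ^ (n - k) := by
  classical
  have hp1 : p ≤ 1 := by linarith
  set Cm := (k-1).choose (s-1) with hCm
  have hq0 : (0:ℝ) ≤ p ^ Cm := pow_nonneg hp0 _
  have hq1 : p ^ Cm ≤ 1 := pow_le_one₀ hp0 hp1
  have hb0 : (0:ℝ) ≤ 1 - p ^ Cm := by linarith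
  have hb1 : (1:ℝ) - p ^ Cm ≤ 1 := by linarith
  have hRHS : (0:ℝ) ≤ (1 - p ^ Cm) ^ (n - k) := pow_nonneg hb0 _
  by_cases hinj : Function.Injective z
  case neg =>
    calc prW p (cands s n) _ ≤ prW p (cands s n) (fun _ => False) :=
          prW_mono hp0 hp1 _ (fun F hF => hinj hF.1)
      _ = 0 := prW_false p _
      _ ≤ _ := hRHS
  by_cases hA : ∀ a ∈ 𝓐, a.card = s - 1
  case neg =>
    calc prW p (cands s n) _ ≤ prW p (cands s n) (fun _ => False) :=
          prW_mono hp0 hp1 _ (fun F hF => hA hF.2.1)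
      _ = 0 := prW_false p _
      _ ≤ _ := hRHS
  -- main case
  set Z : Finset (Fin n) := Finset.univ.image z with hZdef
  set W : Finset (Fin n) := Finset.univ \ Z with hWdef
  set ew : Fin n → Finset (Fin r) → Finset (Fin n) :=
    fun w a => insert w (a.image z) with hewdef
  set Sw : Fin n → Finset (Finset (Fin n)) :=
    fun w => (Finset.powersetCard (s-1) (Finset.univ : Finset (Fin r))).image (ew w) with hSwdef
  set F₀ : Fin n → Finset (Finset (Fin n)) := fun w => 𝓐.image (ew w) with hF₀def
  have hAsub : 𝓐 ⊆ Finset.powersetCard (s-1) (Finset.univ : Finset (Fin r)) :=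
    fun a ha => Finset.mem_powersetCard.2 ⟨Finset.subset_univ a, hA a ha⟩
  have hnotZ : ∀ w ∈ W, ∀ a : Finset (Fin r), w ∉ a.image z := by
    intro w hw a hmem
    obtain ⟨i, _, hi⟩ := Finset.mem_image.1 hmem
    exact (Finset.mem_sdiff.1 hw).2 (hi ▸ Finset.mem_image_of_mem z (Finset.mem_univ i))
  have himgcard : ∀ a : Finset (Fin r), (a.image z).card = a.card :=
    fun a => Finset.card_image_of_injective a hinj
  have hcard_ew : ∀ w ∈ W, ∀ a : Finset (Fin r), a.card = s - 1 → (ew w a).card = s := by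
    intro w hw a hac
    rw [hewdef]
    dsimp only
    rw [Finset.card_insert_of_notMem (hnotZ w hw a), himgcard, hac]
    omega
  have hew_inj : ∀ w ∈ W, ∀ a b : Finset (Fin r), ew w a = ew w b → a = b := by
    intro w hw a b hab
    have h1 : a.image z = b.image z := by
      have := congrArg (fun t => Finset.erase t w) hab
      rw [hewdef] at this
      dsimp only at this
      rwa [Finset.erase_insert (hnotZ w hw a), Finset.erase_insert (hnotZ w hw b)] at this
    ext i
    constructor
    · intro hi
      obtain ⟨j, hj, hji⟩ := Finset.mem_image.1 (h1 ▸ Finset.mem_image_of_mem z hi)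
      exact hinj hji ▸ hj
    · intro hi
      obtain ⟨j, hj, hji⟩ := Finset.mem_image.1 (h1.symm ▸ Finset.mem_image_of_mem z hi)
      exact hinj hji ▸ hj
  have hSw_sub : ∀ w ∈ W, Sw w ⊆ cands s n := by
    intro w hw e he
    obtain ⟨a, ha, hae⟩ := Finset.mem_image.1 he
    have hac : a.card = s - 1 := (Finset.mem_powersetCard.1 ha).2
    exact Finset.mem_filter.2 ⟨Finset.mem_univ _, hae ▸ hcard_ew w hw a hac⟩
  have hdisj : ∀ w ∈ W, ∀ w' ∈ W, w ≠ w' → Disjoint (Sw w) (Sw w') := by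
    intro w hw w' hw' hne
    rw [Finset.disjoint_left]
    intro e he he'
    obtain ⟨a, _, hae⟩ := Finset.mem_image.1 he
    obtain ⟨b, _, hbe⟩ := Finset.mem_image.1 he'
    have : w' ∈ e := hbe ▸ Finset.mem_insert_self w' _
    rw [← hae] at this
    rcases Finset.mem_insert.1 this with h | h
    · exact hne h.symm
    · exact hnotZ w' hw' a h
  have hF0sub : ∀ w, F₀ w ⊆ Sw w := fun w => Finset.image_subset_image hAsub
  have hF0card : ∀ w ∈ W, (F₀ w).card = 𝓐.card := by
    intro w hw
    exact Finset.card_image_of_injOn (fun a _ b _ h => hew_inj w hw a b h)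
  have hSwcard : ∀ w ∈ W, (Sw w).card = r.choose (s-1) := by
    intro w hw
    rw [hSwdef]
    dsimp only
    rw [Finset.card_image_of_injOn (fun a _ b _ h => hew_inj w hw a b h),
      Finset.card_powersetCard, Finset.card_univ, Fintype.card_fin]
  have hAcard : 𝓐.card ≤ r.choose (s-1) := by
    have := Finset.card_le_card hAsub
    rwa [Finset.card_powersetCard, Finset.card_univ, Fintype.card_fin] at this
  -- the implication to the product event
  have himp : ∀ E : Finset (Finset (Fin n)),
      (Function.Injective z ∧ (∀ a ∈ 𝓐, a.card = s - 1) ∧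
        ¬ ∃ w ∈ (Finset.univ : Finset (Fin n)), (∀ i, w ≠ z i) ∧
          ∀ a : Finset (Fin r), a.card = s - 1 → (insert w (a.image z) ∈ E ↔ a ∈ 𝓐)) →
      ∀ w ∈ W, (fun F => F ≠ F₀ w) (E ∩ Sw w) := by
    intro E hE w hw heq
    refine hE.2.2 ⟨w, Finset.mem_univ w, fun i hi => ?_, fun a hac => ?_⟩
    · exact (Finset.mem_sdiff.1 hw).2 (hi ▸ Finset.mem_image_of_mem z (Finset.mem_univ i))
    · constructor
      · intro hmem
        have hSwmem : ew w a ∈ Sw w := Finset.mem_image_of_mem _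
          (Finset.mem_powersetCard.2 ⟨Finset.subset_univ a, hac⟩)
        have : ew w a ∈ F₀ w := heq ▸ Finset.mem_inter.2 ⟨hmem, hSwmem⟩
        obtain ⟨b, hb, hbe⟩ := Finset.mem_image.1 this
        exact hew_inj w hw b a hbe ▸ hb
      · intro ha
        have : ew w a ∈ F₀ w := Finset.mem_image_of_mem _ ha
        rw [heq.symm] at this
        exact (Finset.mem_inter.1 this).1
  have hWcard : W.card = n - r := by
    rw [hWdef, Finset.card_sdiff_of_subset (Finset.subset_univ Z), Finset.card_univ, Fintype.card_fin,
      hZdef, Finset.card_image_of_injective _ hinj, Finset.card_univ, Fintype.card_fin]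
  calc prW p (cands s n) _
      ≤ prW p (cands s n) (fun E => ∀ w ∈ W, (fun F => F ≠ F₀ w) (E ∩ Sw w)) :=
        prW_mono hp0 hp1 _ himp
    _ = ∏ w ∈ W, prW p (Sw w) (fun F => F ≠ F₀ w) :=
        prW_prod p (cands s n) W Sw (fun w F => F ≠ F₀ w) hSw_sub hdisj
    _ ≤ ∏ w ∈ W, (1 - p ^ Cm) := by
        refine Finset.prod_le_prod (fun w hw => prW_nonneg hp0 hp1 _ _) (fun w hw => ?_)
        rw [prW_ne_single p (Sw w) (F₀ w) (hF0sub w), hF0card w hw, hSwcard w hw]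
        have key : p ^ Cm ≤ p ^ 𝓐.card * (1 - p) ^ (r.choose (s-1) - 𝓐.card) := by
          have h1 : p ^ (r.choose (s-1) - 𝓐.card) ≤ (1 - p) ^ (r.choose (s-1) - 𝓐.card) :=
            pow_le_pow_left₀ hp0 (by linarith) _
          have h2 : p ^ Cm ≤ p ^ (r.choose (s-1)) := by
            refine pow_le_pow_of_le_one hp0 hp1 ?_
            exact Nat.choose_le_choose (s-1) hr
          calc p ^ Cm ≤ p ^ (r.choose (s-1)) := h2
            _ = p ^ 𝓐.card * p ^ (r.choose (s-1) - 𝓐.card) := by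
                rw [← pow_add, Nat.add_sub_cancel' hAcard]
            _ ≤ p ^ 𝓐.card * (1 - p) ^ (r.choose (s-1) - 𝓐.card) :=
                mul_le_mul_of_nonneg_left h1 (pow_nonneg hp0 _)
        linarith
    _ = (1 - p ^ Cm) ^ W.card := Finset.prod_const _
    _ ≤ (1 - p ^ Cm) ^ (n - k) := by
        rw [hWcard]
        exact pow_le_pow_of_le_one hb0 hb1 (by omega)

set_option maxHeartbeats 1000000 in
lemma fail_union_bound (s k n : ℕ) (hs : 3 ≤ s) (hk : s ≤ k) (p : ℝ)
    (hp0 : 0 ≤ p) (hp2 : p ≤ 1/2) (hn : 1 ≤ n) :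
    prW p (cands s n) (fun E => ¬ FullLevelExt s k Finset.univ E)
    ≤ (k : ℝ) * 2^(2^k) * (n:ℝ)^k * (1 - p ^ ((k-1).choose (s-1))) ^ (n - k) := by
  classical
  have hp1 : p ≤ 1 := by linarith
  have hq0 : (0:ℝ) ≤ p ^ ((k-1).choose (s-1)) := pow_nonneg hp0 _
  have hq1 : p ^ ((k-1).choose (s-1)) ≤ 1 := pow_le_one₀ hp0 hp1
  set Bnd := (1 - p ^ ((k-1).choose (s-1))) ^ (n - k) with hBnddef
  have hBnd0 : (0:ℝ) ≤ Bnd := pow_nonneg (by linarith) _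
  set BadP : (r : ℕ) → (Fin r → Fin n) → Finset (Finset (Fin r)) →
      Finset (Finset (Fin n)) → Prop := fun r z 𝓐 E =>
    Function.Injective z ∧ (∀ a ∈ 𝓐, a.card = s - 1) ∧
      ¬ ∃ w ∈ (Finset.univ : Finset (Fin n)), (∀ i, w ≠ z i) ∧
        ∀ a : Finset (Fin r), a.card = s - 1 → (insert w (a.image z) ∈ E ↔ a ∈ 𝓐)
    with hBadP
  set Bad2 : (r : ℕ) → (Fin r → Fin n) → Finset (Finset (Fin n)) → Prop :=
    fun r z E => ∃ 𝓐, BadP r z 𝓐 E with hBad2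
  set Bad1 : ℕ → Finset (Finset (Fin n)) → Prop :=
    fun r E => ∃ z : Fin r → Fin n, Bad2 r z E with hBad1
  have himp1 : ∀ E, (¬ FullLevelExt s k Finset.univ E) → ∃ r ∈ Finset.range k, Bad1 r E := by
    intro E hE
    by_contra hcon
    apply hE
    intro r hr1 hr2 z hz hinj 𝓐 hA
    by_contra hno
    exact hcon ⟨r, Finset.mem_range.2 (by omega), z, 𝓐, hinj, hA, hno⟩
  have hinner : ∀ r ∈ Finset.range k, prW p (cands s n) (Bad1 r)
      ≤ (n:ℝ)^k * 2^(2^k) * Bnd := by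
    intro r hrk
    have hr : r ≤ k - 1 := by have := Finset.mem_range.1 hrk; omega
    have s2 : prW p (cands s n) (Bad1 r) ≤
        ∑ z ∈ (Finset.univ : Finset (Fin r → Fin n)), prW p (cands s n) (Bad2 r z) := by
      refine le_trans (prW_mono hp0 hp1 _ (fun E hE => ?_))
        (prW_union_bound hp0 hp1 (cands s n) Finset.univ (Bad2 r))
      obtain ⟨z, hz⟩ := hE
      exact ⟨z, Finset.mem_univ z, hz⟩
    have s3 : ∀ z : Fin r → Fin n, prW p (cands s n) (Bad2 r z) ≤
        ∑ 𝓐 ∈ (Finset.univ : Finset (Finset (Finset (Fin r)))),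
          prW p (cands s n) (BadP r z 𝓐) := by
      intro z
      refine le_trans (prW_mono hp0 hp1 _ (fun E hE => ?_))
        (prW_union_bound hp0 hp1 (cands s n) Finset.univ (BadP r z))
      obtain ⟨𝓐, h𝓐⟩ := hE
      exact ⟨𝓐, Finset.mem_univ 𝓐, h𝓐⟩
    have s4 : ∀ (z : Fin r → Fin n) (𝓐 : Finset (Finset (Fin r))),
        prW p (cands s n) (BadP r z 𝓐) ≤ Bnd :=
      fun z 𝓐 => tuple_fail_bound s k n hs hk p hp0 hp2 r hr z 𝓐
    have count : ((Fintype.card (Fin r → Fin n) : ℝ) *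
        ((Fintype.card (Finset (Finset (Fin r))) : ℝ) * Bnd)) ≤ (n:ℝ)^k * (2^(2^k) * Bnd) := by
      rw [Fintype.card_fun, Fintype.card_finset, Fintype.card_finset, Fintype.card_fin,
        Fintype.card_fin]
      push_cast
      refine mul_le_mul ?_ (mul_le_mul_of_nonneg_right ?_ hBnd0) ?_ ?_
      · exact pow_le_pow_right₀ (by exact_mod_cast hn) (le_of_lt (Finset.mem_range.1 hrk))
      · refine pow_le_pow_right₀ one_le_two ?_
        exact Nat.pow_le_pow_right (by norm_num) (le_of_lt (Finset.mem_range.1 hrk))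
      · positivity
      · positivity
    calc prW p (cands s n) (Bad1 r)
        ≤ ∑ z ∈ (Finset.univ : Finset (Fin r → Fin n)), prW p (cands s n) (Bad2 r z) := s2
      _ ≤ ∑ z ∈ (Finset.univ : Finset (Fin r → Fin n)),
            ∑ 𝓐 ∈ (Finset.univ : Finset (Finset (Finset (Fin r)))),
              prW p (cands s n) (BadP r z 𝓐) := Finset.sum_le_sum (fun z _ => s3 z)
      _ ≤ ∑ _z ∈ (Finset.univ : Finset (Fin r → Fin n)),
            ∑ _𝓐 ∈ (Finset.univ : Finset (Finset (Finset (Fin r)))), Bnd :=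
          Finset.sum_le_sum (fun z _ => Finset.sum_le_sum (fun 𝓐 _ => s4 z 𝓐))
      _ = (Fintype.card (Fin r → Fin n) : ℝ) *
            ((Fintype.card (Finset (Finset (Fin r))) : ℝ) * Bnd) := by
          rw [Finset.sum_const, Finset.sum_const, Finset.card_univ, Finset.card_univ,
            nsmul_eq_mul, nsmul_eq_mul]
      _ ≤ (n:ℝ)^k * (2^(2^k) * Bnd) := count
      _ = (n:ℝ)^k * 2^(2^k) * Bnd := by ring
  calc prW p (cands s n) (fun E => ¬ FullLevelExt s k Finset.univ E)
      ≤ prW p (cands s n) (fun E => ∃ r ∈ Finset.range k, Bad1 r E) :=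
        prW_mono hp0 hp1 _ himp1
    _ ≤ ∑ r ∈ Finset.range k, prW p (cands s n) (Bad1 r) :=
        prW_union_bound hp0 hp1 (cands s n) (Finset.range k) Bad1
    _ ≤ ∑ _r ∈ Finset.range k, (n:ℝ)^k * 2^(2^k) * Bnd := Finset.sum_le_sum hinner
    _ = (k : ℝ) * 2^(2^k) * (n:ℝ)^k * Bnd := by
        rw [Finset.sum_const, Finset.card_range, nsmul_eq_mul]
        ring




/-- If `1/α > C(k-1, s-1)`, then a.a.s. `G^s(n, n^{-α})` satisfies the full level `(k-1)`
extension property. -/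
theorem statement17 (s k : ℕ) (hs : 3 ≤ s) (hk : s ≤ k) (α : ℝ) (hα : 0 < α)
    (h : ((k-1).choose (s-1) : ℝ) < 1/α) :
    Tendsto (fun n : ℕ => pr s n ((n : ℝ) ^ (-α))
        (fun E => FullLevelExt s k Finset.univ E)) atTop (nhds 1) := by
  classical
  have hk1 : s - 1 ≤ k - 1 := by omega
  set Cm := (k-1).choose (s-1) with hCmdef
  have hCmpos : 0 < Cm := Nat.choose_pos hk1
  set β := α * Cm with hβdef
  have hCmR : (0:ℝ) < Cm := by exact_mod_cast hCmpos
  have hβ0 : 0 < β := mul_pos hα hCmR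
  have hβ1 : β < 1 := by
    have h2 : α * (Cm:ℝ) < α * (1/α) := mul_lt_mul_of_pos_left h hα
    rwa [mul_one_div, div_self (ne_of_gt hα)] at h2
  have h1β : (0:ℝ) < 1 - β := by linarith
  set D := (k:ℝ) * 2^(2^k) with hDdef
  have hD0 : (0:ℝ) ≤ D := by positivity
  set q : ℕ → ℝ := fun n => (n:ℝ) ^ (-α) with hqdef
  have hq0 : ∀ n : ℕ, 0 ≤ q n := fun n => Real.rpow_nonneg (Nat.cast_nonneg n) _
  have hcompl : ∀ n : ℕ, pr s n (q n) (fun E => FullLevelExt s k Finset.univ E)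
      = 1 - prW (q n) (cands s n) (fun E => ¬ FullLevelExt s k Finset.univ E) := by
    intro n
    have h1 := prW_add_not (q n) (cands s n) (fun E => FullLevelExt s k Finset.univ E)
    have h2 : pr s n (q n) (fun E => FullLevelExt s k Finset.univ E)
        = prW (q n) (cands s n) (fun E => FullLevelExt s k Finset.univ E) := rfl
    rw [h2]; linarith
  set fail : ℕ → ℝ :=
    fun n => prW (q n) (cands s n) (fun E => ¬ FullLevelExt s k Finset.univ E) with hfaildef
  suffices hfail : Tendsto fail atTop (nhds 0) by
    have h3 : Tendsto (fun n => 1 - fail n) atTop (nhds (1 - 0)) :=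
      tendsto_const_nhds.sub hfail
    rw [sub_zero] at h3
    exact h3.congr (fun n => (hcompl n).symm)
  -- `q n ≤ 1/2` eventually
  have hqtend : Tendsto q atTop (nhds 0) :=
    (tendsto_rpow_neg_atTop hα).comp tendsto_natCast_atTop_atTop
  have hqhalf : ∀ᶠ n : ℕ in atTop, q n ≤ 1/2 :=
    hqtend.eventually_le_const (by norm_num)
  -- lower bound
  have hLb : ∀ᶠ n : ℕ in atTop, 0 ≤ fail n := by
    filter_upwards [hqhalf] with n hn
    exact prW_nonneg (hq0 n) (by linarith) _ _
  -- the dominating function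
  set G : ℕ → ℝ :=
    fun n => D * Real.exp ((k:ℝ) * Real.log n - (1/2) * (n:ℝ) ^ (1 - β)) with hGdef
  -- upper bound
  have hUb : ∀ᶠ n : ℕ in atTop, fail n ≤ G n := by
    filter_upwards [hqhalf, eventually_ge_atTop 1, eventually_ge_atTop (2*k)]
      with n hnq hn1 hn2k
    have hx0 : (0:ℝ) < n := by exact_mod_cast hn1
    have hx1 : (1:ℝ) ≤ n := by exact_mod_cast hn1
    have step1 : fail n ≤ D * (n:ℝ)^k * (1 - (q n) ^ Cm) ^ (n - k) :=
      fail_union_bound s k n hs hk (q n) (hq0 n) hnq hn1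
    have hqCm : (q n) ^ Cm = (n:ℝ) ^ (-β) := by
      rw [hqdef]
      dsimp only
      rw [← Real.rpow_natCast ((n:ℝ) ^ (-α)) Cm, ← Real.rpow_mul (le_of_lt hx0)]
      congr 1
      rw [hβdef]; ring
    have hrβ0 : 0 ≤ (n:ℝ) ^ (-β) := Real.rpow_nonneg (le_of_lt hx0) _
    have hrβ1 : (n:ℝ) ^ (-β) ≤ 1 :=
      Real.rpow_le_one_of_one_le_of_nonpos hx1 (by linarith)
    have step2 : (1 - (q n) ^ Cm) ^ (n - k) ≤
        Real.exp (-((n - k : ℕ) : ℝ) * (n:ℝ) ^ (-β)) := by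
      rw [hqCm]
      have hee : 1 - (n:ℝ) ^ (-β) ≤ Real.exp (-(n:ℝ) ^ (-β)) := by
        have := Real.add_one_le_exp (-(n:ℝ) ^ (-β))
        linarith
      calc (1 - (n:ℝ) ^ (-β)) ^ (n - k)
          ≤ (Real.exp (-(n:ℝ) ^ (-β))) ^ (n - k) :=
            pow_le_pow_left₀ (by linarith) hee _
        _ = Real.exp (((n - k : ℕ) : ℝ) * (-(n:ℝ) ^ (-β))) :=
            (Real.exp_nat_mul _ _).symm
        _ = Real.exp (-((n - k : ℕ) : ℝ) * (n:ℝ) ^ (-β)) := by ring_nf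
    have hkn : k ≤ n := by omega
    have hcast : ((n - k : ℕ) : ℝ) = (n:ℝ) - k := by
      rw [Nat.cast_sub hkn]
    have hhalf : (n:ℝ)/2 ≤ (n:ℝ) - k := by
      have : (2*k : ℕ) ≤ n := hn2k
      have h2 : (2*(k:ℝ)) ≤ n := by exact_mod_cast this
      linarith
    have hmul : (n:ℝ) * (n:ℝ) ^ (-β) = (n:ℝ) ^ (1 - β) := by
      rw [sub_eq_add_neg, Real.rpow_add hx0, Real.rpow_one]
    have step3 : -((n - k : ℕ) : ℝ) * (n:ℝ) ^ (-β) ≤ -(1/2) * (n:ℝ) ^ (1 - β) := by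
      rw [hcast]
      have h4 : ((n:ℝ)/2) * (n:ℝ) ^ (-β) ≤ ((n:ℝ) - k) * (n:ℝ) ^ (-β) :=
        mul_le_mul_of_nonneg_right hhalf hrβ0
      have h5 : ((n:ℝ)/2) * (n:ℝ) ^ (-β) = (1/2) * (n:ℝ) ^ (1 - β) := by
        rw [← hmul]; ring
      nlinarith [h4, h5]
    have step4 : (1 - (q n) ^ Cm) ^ (n - k) ≤ Real.exp (-(1/2) * (n:ℝ) ^ (1 - β)) :=
      le_trans step2 (Real.exp_le_exp.2 step3)
    have hnk : (n:ℝ)^k = Real.exp ((k:ℝ) * Real.log n) := by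
      rw [Real.exp_nat_mul, Real.exp_log hx0]
    calc fail n ≤ D * (n:ℝ)^k * (1 - (q n) ^ Cm) ^ (n - k) := step1
      _ ≤ D * (n:ℝ)^k * Real.exp (-(1/2) * (n:ℝ) ^ (1 - β)) := by
          refine mul_le_mul_of_nonneg_left step4 ?_
          positivity
      _ = G n := by
          rw [hGdef]
          dsimp only
          rw [hnk, mul_assoc, ← Real.exp_add]
          congr 2
          ring
  -- the dominating function tends to 0
  have hGtend : Tendsto G atTop (nhds 0) := by
    have hlog : ∀ᶠ (x:ℝ) in atTop, (k:ℝ) * Real.log x ≤ (1/4) * x ^ (1-β) := by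
      have hlo := (isLittleO_log_rpow_atTop h1β).def
        (show (0:ℝ) < 1/(4*(k+1)) by positivity)
      filter_upwards [hlo, eventually_ge_atTop (1:ℝ)] with x hx hx1
      have hlog0 : 0 ≤ Real.log x := Real.log_nonneg hx1
      have hr0 : 0 ≤ x ^ (1-β) := Real.rpow_nonneg (by linarith) _
      rw [Real.norm_eq_abs, Real.norm_eq_abs, abs_of_nonneg hlog0, abs_of_nonneg hr0] at hx
      have h6 : (k:ℝ) * Real.log x ≤ (k:ℝ) * (1/(4*(k+1)) * x ^ (1-β)) :=
        mul_le_mul_of_nonneg_left hx (Nat.cast_nonneg k)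
      have hc : (k:ℝ) * (1/(4*((k:ℝ)+1))) ≤ 1/4 := by
        rw [mul_one_div, div_le_div_iff₀ (by positivity) (by norm_num)]
        nlinarith [Nat.cast_nonneg (α := ℝ) k]
      have h7 : (k:ℝ) * (1/(4*((k:ℝ)+1)) * x ^ (1-β)) ≤ (1/4) * x ^ (1-β) := by
        rw [← mul_assoc]
        exact mul_le_mul_of_nonneg_right hc hr0
      linarith
    have hminor : Tendsto (fun x : ℝ => -((1/4) * x ^ (1-β))) atTop atBot := by
      refine tendsto_neg_atTop_atBot.comp ?_
      exact (tendsto_rpow_atTop h1β).const_mul_atTop (by norm_num)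
    have hbR : Tendsto (fun x : ℝ => (k:ℝ) * Real.log x - (1/2) * x ^ (1-β)) atTop atBot := by
      refine tendsto_atBot_mono' atTop ?_ hminor
      filter_upwards [hlog, eventually_ge_atTop (1:ℝ)] with x hx hx1
      have hr0 : 0 ≤ x ^ (1-β) := Real.rpow_nonneg (by linarith) _
      linarith
    have hbN : Tendsto (fun n : ℕ => (k:ℝ) * Real.log n - (1/2) * (n:ℝ) ^ (1-β))
        atTop atBot := hbR.comp tendsto_natCast_atTop_atTop
    have : Tendsto G atTop (nhds (D * 0)) :=
      (Real.tendsto_exp_atBot.comp hbN).const_mul D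
    rwa [mul_zero] at this
  exact tendsto_of_tendsto_of_tendsto_of_le_of_le' tendsto_const_nhds hGtend hLb hUb


end RandomHypergraph
end

section
/- Let s ≥ 2. For every integer i ≥ 1 there exist first-order formulas D_i(x_1, x_2) and D^=_i(x_1, x_2) in the language of s-uniform hypergraphs, each of quantifier depth ⌈log_2 i⌉ + s − 2, such that for every s-hypergraph G and all vertices a, b ∈ V(G): G ⊨ D_i(a, b) if and only if a = b or d_G(a, b) ≤ i, and G ⊨ D^=_i(a, b) if and only if d_G(a, b) = i. -/
open Filter Topology

namespace RandomHypergraph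

section Statement18Aux

open FirstOrder FirstOrder.Language

/-! #### Path lemmas -/

lemma hasPath_concat {V : Type} [DecidableEq V] {E : Finset (Finset V)} {a b c : V}
    {t1 t2 : ℕ} (h1 : HasPath E a c t1) (h2 : HasPath E c b t2) :
    HasPath E a b (t1 + t2) := by
  cases t1 with
  | zero =>
    have h : a = c := h1
    subst h; simpa using h2
  | succ u =>
    cases t2 with
    | zero =>
      have h : c = b := h2
      subst h; exact h1
    | succ v =>
      obtain ⟨es, hesE, ha, hc, hint⟩ := h1
      obtain ⟨fs, hfsE, hc', hb, hint'⟩ := h2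
      have heq : u + 1 + (v + 1) = (u + v + 1) + 1 := by omega
      rw [heq]
      refine ⟨fun k => if k ≤ u then es k else fs (k - (u + 1)), ?_, ?_, ?_, ?_⟩
      · intro k hk
        by_cases h : k ≤ u
        · simpa [h] using hesE k h
        · simpa [h] using hfsE (k - (u + 1)) (by omega)
      · simpa using ha
      · have h : ¬ (u + v + 1 ≤ u) := by omega
        have h2' : u + v + 1 - (u + 1) = v := by omega
        simpa [h, h2'] using hb
      · intro k hk
        by_cases h : k + 1 ≤ u
        · have h' : k ≤ u := by omega
          simpa [h, h'] using hint k h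
        · by_cases h' : k ≤ u
          · have hk' : k = u := by omega
            have hz : k + 1 - (u + 1) = 0 := by omega
            have hcc : c ∈ es k ∩ fs 0 := Finset.mem_inter.2 ⟨hk' ▸ hc, hc'⟩
            simp only [if_pos h', if_neg h, hz]
            exact ⟨c, hcc⟩
          · have e1 : k + 1 - (u + 1) = (k - (u + 1)) + 1 := by omega
            have := hint' (k - (u + 1)) (by omega)
            simp only [if_neg h, if_neg h', e1]
            exact this

lemma hasPath_split {V : Type} [DecidableEq V] {E : Finset (Finset V)} {a b : V}
    {t j : ℕ} (h : HasPath E a b t) (hj1 : 1 ≤ j) (hj2 : j < t) :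
    ∃ c, (∃ e ∈ E, c ∈ e) ∧ HasPath E a c j ∧ HasPath E c b (t - j) := by
  obtain ⟨u, rfl⟩ : ∃ u, t = u + 1 := ⟨t - 1, by omega⟩
  obtain ⟨es, hesE, ha, hb, hint⟩ := h
  obtain ⟨c, hc⟩ := hint (j - 1) (by omega)
  rw [Finset.mem_inter] at hc
  have hj1' : j - 1 + 1 = j := by omega
  refine ⟨c, ⟨es (j - 1), hesE _ (by omega), hc.1⟩, ?_, ?_⟩
  · obtain ⟨j', rfl⟩ : ∃ j', j = j' + 1 := ⟨j - 1, by omega⟩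
    refine ⟨es, fun i hi => hesE i (by omega), ha, ?_, fun i hi => hint i (by omega)⟩
    simpa using hc.1
  · have hv : u + 1 - j = (u - j) + 1 := by omega
    rw [hv]
    refine ⟨fun k => es (k + j), fun i hi => hesE _ (by omega), ?_, ?_, fun i hi => ?_⟩
    · simpa [hj1'] using hc.2
    · show b ∈ es (u - j + j)
      have : u - j + j = u := by omega
      rw [this]; exact hb
    · have h2 := hint (i + j) (by omega)
      have e1 : i + j + 1 = i + 1 + j := by omega
      rwa [e1] at h2

/-! #### The formulas -/

variable {s : ℕ}

/-- Variable assignment for the atomic edge formula. -/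
def varsF (s : ℕ) (k : Fin s) : (Fin 2) ⊕ (Fin (s - 2)) :=
  if h : (k : ℕ) < 2 then Sum.inl ⟨k, h⟩
  else Sum.inr ⟨(k : ℕ) - 2, by have := k.isLt; omega⟩

/-- The atomic formula `N(x₀, x₁, z₀, …, z_{s-3})`. -/
def atomF (s : ℕ) : (HLang s).BoundedFormula (Fin 2) (s - 2) :=
  BoundedFormula.rel (l := s) (PLift.up rfl) fun k => Term.var (varsF s k)

/-- The distance-`≤ i` formula. -/
def Dform (s : ℕ) : ℕ → (HLang s).Formula (Fin 2)
  | 0 => Term.equal (Term.var 0) (Term.var 1)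
  | 1 => Term.equal (Term.var 0) (Term.var 1) ⊔ (atomF s).exs
  | (n + 2) =>
    ((BoundedFormula.relabel
        (fun j : Fin 2 => if j = 0 then Sum.inl (0 : Fin 2) else Sum.inr (0 : Fin 1))
        (Dform s ((n + 3) / 2))) ⊓
     (BoundedFormula.relabel
        (fun j : Fin 2 => if j = 0 then Sum.inr (0 : Fin 1) else Sum.inl (1 : Fin 2))
        (Dform s ((n + 2) / 2)))).ex
  decreasing_by all_goals omega

/-! #### Quantifier depth computations -/

@[simp] lemma qdepth_bot {L : FirstOrder.Language} {α : Type} {n : ℕ} :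
    qdepth (⊥ : L.BoundedFormula α n) = 0 := rfl

@[simp] lemma qdepth_not {L : FirstOrder.Language} {α : Type} {n : ℕ}
    (φ : L.BoundedFormula α n) : qdepth φ.not = qdepth φ := by
  simp [BoundedFormula.not, qdepth]

@[simp] lemma qdepth_inf {L : FirstOrder.Language} {α : Type} {n : ℕ}
    (φ ψ : L.BoundedFormula α n) : qdepth (φ ⊓ ψ) = max (qdepth φ) (qdepth ψ) := by
  show qdepth ((φ.imp ψ.not).not) = _
  simp [qdepth]

@[simp] lemma qdepth_sup {L : FirstOrder.Language} {α : Type} {n : ℕ}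
    (φ ψ : L.BoundedFormula α n) : qdepth (φ ⊔ ψ) = max (qdepth φ) (qdepth ψ) := by
  show qdepth (φ.not.imp ψ) = _
  simp [qdepth]

@[simp] lemma qdepth_ex {L : FirstOrder.Language} {α : Type} {n : ℕ}
    (φ : L.BoundedFormula α (n + 1)) : qdepth φ.ex = qdepth φ + 1 := by
  show qdepth (φ.not.all.not) = _
  simp [qdepth]

lemma qdepth_exs {L : FirstOrder.Language} {α : Type} :
    ∀ {n : ℕ} (φ : L.BoundedFormula α n), qdepth φ.exs = qdepth φ + n
  | 0, φ => rfl
  | n + 1, φ => by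
    rw [BoundedFormula.exs]
    rw [qdepth_exs φ.ex, qdepth_ex]
    omega

lemma qdepth_castLE {L : FirstOrder.Language} {α : Type} :
    ∀ {m n : ℕ} (h : m ≤ n) (φ : L.BoundedFormula α m),
      qdepth (φ.castLE h) = qdepth φ
  | _, _, _, .falsum => rfl
  | _, _, _, .equal _ _ => rfl
  | _, _, _, .rel _ _ => rfl
  | _, _, h, .imp f g => by
    simp [BoundedFormula.castLE, qdepth, qdepth_castLE h f, qdepth_castLE h g]
  | _, _, h, .all f => by
    simp [BoundedFormula.castLE, qdepth, qdepth_castLE _ f]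

lemma qdepth_mapTermRel {L L' : FirstOrder.Language} {α β : Type} {g : ℕ → ℕ}
    (ft : ∀ n, L.Term (α ⊕ Fin n) → L'.Term (β ⊕ Fin (g n)))
    (fr : ∀ n, L.Relations n → L'.Relations n)
    (h : ∀ n, L'.BoundedFormula β (g (n + 1)) → L'.BoundedFormula β (g n + 1))
    (hh : ∀ n ψ, qdepth (h n ψ) = qdepth ψ) :
    ∀ {n} (φ : L.BoundedFormula α n), qdepth (φ.mapTermRel ft fr h) = qdepth φ := by
  intro n φ
  induction φ with
  | falsum => rfl
  | equal => rfl
  | rel => rfl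
  | imp f g ihf ihg => simp [BoundedFormula.mapTermRel, qdepth, ihf, ihg]
  | all f ih => simp [BoundedFormula.mapTermRel, qdepth, hh, ih]

lemma qdepth_relabel {L : FirstOrder.Language} {α β : Type} {n k : ℕ}
    (g : α → β ⊕ Fin n) (φ : L.BoundedFormula α k) :
    qdepth (φ.relabel g) = qdepth φ :=
  qdepth_mapTermRel _ _ _ (fun _ ψ => qdepth_castLE _ ψ) φ

lemma qdepth_Dform (s : ℕ) : ∀ i, 1 ≤ i →
    qdepth (Dform s i) = Nat.clog 2 i + (s - 2) := by
  intro i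
  induction i using Nat.strong_induction_on with
  | _ i ih =>
    match i with
    | 0 => intro h; omega
    | 1 =>
      intro _
      rw [Dform]
      rw [qdepth_sup, qdepth_exs]
      simp [atomF, qdepth, Term.equal, Term.bdEqual]
    | (n + 2) =>
      intro _
      rw [Dform]
      rw [qdepth_ex, qdepth_inf, qdepth_relabel, qdepth_relabel,
        ih ((n + 3) / 2) (by omega) (by omega), ih ((n + 2) / 2) (by omega) (by omega)]
      have h1 : Nat.clog 2 (n + 2) = Nat.clog 2 ((n + 3) / 2) + 1 := by
        rw [Nat.clog_of_two_le one_lt_two (by omega)]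
        have : (n + 2 + 2 - 1) / 2 = (n + 3) / 2 := by omega
        rw [this]
      have h2 : Nat.clog 2 ((n + 2) / 2) ≤ Nat.clog 2 ((n + 3) / 2) :=
        Nat.clog_mono_right _ (by omega)
      omega

end Statement18Aux

section Statement18Sem

open FirstOrder FirstOrder.Language

variable {s : ℕ}

lemma P_split (G : HGraph s) (a b : {x : ℕ // x ∈ G.verts}) {h1 h2 : ℕ}
    (hh1 : 1 ≤ h2) (hh2 : h2 ≤ h1) :
    (a = b ∨ ∃ t ≤ h1 + h2, HasPath G.edges a.1 b.1 t) ↔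
      ∃ z : {x : ℕ // x ∈ G.verts},
        (a = z ∨ ∃ t ≤ h1, HasPath G.edges a.1 z.1 t) ∧
        (z = b ∨ ∃ t ≤ h2, HasPath G.edges z.1 b.1 t) := by
  constructor
  · rintro (rfl | ⟨t, ht, hp⟩)
    · exact ⟨a, Or.inl rfl, Or.inl rfl⟩
    · by_cases hcase : t ≤ h1
      · exact ⟨b, Or.inr ⟨t, hcase, hp⟩, Or.inl rfl⟩
      · obtain ⟨c, ⟨e, he, hce⟩, hp1, hp2⟩ := hasPath_split (j := h1) hp (by omega) (by omega)
        exact ⟨⟨c, G.edge_sub e he hce⟩, Or.inr ⟨h1, le_rfl, hp1⟩,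
          Or.inr ⟨t - h1, by omega, hp2⟩⟩
  · rintro ⟨z, (rfl | ⟨t1, ht1, hp1⟩), (rfl | ⟨t2, ht2, hp2⟩)⟩
    · exact Or.inl rfl
    · exact Or.inr ⟨t2, by omega, hp2⟩
    · exact Or.inr ⟨t1, by omega, hp1⟩
    · exact Or.inr ⟨t1 + t2, by omega, hasPath_concat hp1 hp2⟩

lemma exists_tuple_iff (hs : 2 ≤ s) (G : HGraph s) (a b : {x : ℕ // x ∈ G.verts}) :
    (∃ xs : Fin (s - 2) → {x : ℕ // x ∈ G.verts},
        Finset.univ.image (fun k : Fin s => (Sum.elim ![a, b] xs (varsF s k)).1) ∈ G.edges)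
      ↔ (a ≠ b ∧ HasPath G.edges a.1 b.1 1) := by
  have h0s : 0 < s := by omega
  have h1s : 1 < s := by omega
  constructor
  · rintro ⟨xs, hmem⟩
    set f : Fin s → ℕ := fun k => (Sum.elim ![a, b] xs (varsF s k)).1 with hf
    have hfa : f ⟨0, h0s⟩ = a.1 := by
      simp [hf, varsF]
    have hfb : f ⟨1, h1s⟩ = b.1 := by
      simp [hf, varsF]
    have haF : a.1 ∈ Finset.univ.image f := Finset.mem_image.2 ⟨⟨0, h0s⟩, Finset.mem_univ _, hfa⟩
    have hbF : b.1 ∈ Finset.univ.image f := Finset.mem_image.2 ⟨⟨1, h1s⟩, Finset.mem_univ _, hfb⟩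
    have hne : a ≠ b := by
      rintro rfl
      have hcard : (Finset.univ.image f).card = s := G.edge_card _ hmem
      have hsub : Finset.univ.image f ⊆
          insert a.1 (Finset.univ.image fun j : Fin (s - 2) => (xs j).1) := by
        intro x hx
        obtain ⟨k, _, rfl⟩ := Finset.mem_image.1 hx
        by_cases hk : (k : ℕ) < 2
        · have : f k = a.1 := by
            simp only [hf, varsF, dif_pos hk, Sum.elim_inl]
            have : (⟨(k : ℕ), hk⟩ : Fin 2) = 0 ∨ (⟨(k : ℕ), hk⟩ : Fin 2) = 1 := by
              have hk01 : (k : ℕ) = 0 ∨ (k : ℕ) = 1 := by omega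
              rcases hk01 with h | h
              · left; exact Fin.ext h
              · right; exact Fin.ext h
            rcases this with h | h <;> rw [h] <;> simp
          rw [this]; exact Finset.mem_insert_self _ _
        · have : f k = (xs ⟨(k : ℕ) - 2, by have := k.isLt; omega⟩).1 := by
            simp only [hf, varsF, dif_neg hk, Sum.elim_inr]
          rw [this]
          exact Finset.mem_insert_of_mem (Finset.mem_image.2 ⟨_, Finset.mem_univ _, rfl⟩)
      have hle := Finset.card_le_card hsub
      have h1 := Finset.card_insert_le a.1 (Finset.univ.image fun j : Fin (s - 2) => (xs j).1)
      have h2 := Finset.card_image_le (s := (Finset.univ : Finset (Fin (s - 2))))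
        (f := fun j : Fin (s - 2) => (xs j).1)
      simp only [Finset.card_univ, Fintype.card_fin] at h2
      omega
    refine ⟨hne, ⟨fun _ => Finset.univ.image f, fun i _ => hmem, haF, hbF, fun i hi => (Nat.not_succ_le_zero i hi).elim⟩⟩
  · rintro ⟨hne, es, hesE, ha, hb, -⟩
    have hne' : a.1 ≠ b.1 := fun h => hne (Subtype.ext h)
    set e : Finset ℕ := es 0 with he
    have heE : e ∈ G.edges := hesE 0 le_rfl
    have hecard : e.card = s := G.edge_card e heE
    set r : Finset ℕ := e \ {a.1, b.1} with hr
    have hpair : ({a.1, b.1} : Finset ℕ) ⊆ e := by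
      intro x hx
      rcases Finset.mem_insert.1 hx with rfl | hx
      · exact ha
      · rw [Finset.mem_singleton.1 hx]; exact hb
    have hrcard : r.card = s - 2 := by
      rw [hr, Finset.card_sdiff_of_subset hpair, Finset.card_pair hne', hecard]
    let eqv := r.equivFinOfCardEq hrcard
    have hrsub : r ⊆ e := Finset.sdiff_subset
    refine ⟨fun k => ⟨(eqv.symm k).1, G.edge_sub e heE (hrsub (eqv.symm k).2)⟩, ?_⟩
    have himg : (Finset.univ.image fun k : Fin s =>
        (Sum.elim ![a, b] (fun k => (⟨(eqv.symm k).1,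
          G.edge_sub e heE (hrsub (eqv.symm k).2)⟩ : {x : ℕ // x ∈ G.verts})) (varsF s k)).1) = e := by
      apply Finset.Subset.antisymm
      · intro x hx
        obtain ⟨k, _, rfl⟩ := Finset.mem_image.1 hx
        by_cases hk : (k : ℕ) < 2
        · simp only [varsF, dif_pos hk, Sum.elim_inl]
          have : (⟨(k : ℕ), hk⟩ : Fin 2) = 0 ∨ (⟨(k : ℕ), hk⟩ : Fin 2) = 1 := by
            have hk01 : (k : ℕ) = 0 ∨ (k : ℕ) = 1 := by omega
            rcases hk01 with h | h
            · left; exact Fin.ext h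
            · right; exact Fin.ext h
          rcases this with h | h <;> rw [h] <;> simp [ha, hb]
        · simp only [varsF, dif_neg hk, Sum.elim_inr]
          exact hrsub (eqv.symm _).2
      · intro x hx
        by_cases hxa : x = a.1
        · subst hxa
          refine Finset.mem_image.2 ⟨⟨0, h0s⟩, Finset.mem_univ _, ?_⟩
          simp [varsF]
        · by_cases hxb : x = b.1
          · subst hxb
            refine Finset.mem_image.2 ⟨⟨1, h1s⟩, Finset.mem_univ _, ?_⟩
            simp [varsF]
          · have hxr : x ∈ r := by
              rw [hr, Finset.mem_sdiff]
              exact ⟨hx, by simp [hxa, hxb]⟩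
            set j : Fin (s - 2) := eqv ⟨x, hxr⟩ with hj
            refine Finset.mem_image.2 ⟨⟨(j : ℕ) + 2, by have := j.isLt; omega⟩,
              Finset.mem_univ _, ?_⟩
            have hk2 : ¬ (((⟨(j : ℕ) + 2, by have := j.isLt; omega⟩ : Fin s) : ℕ) < 2) := by
              simp
            simp only [varsF, dif_neg hk2, Sum.elim_inr]
            have : (⟨((⟨(j : ℕ) + 2, by have := j.isLt; omega⟩ : Fin s) : ℕ) - 2,
                by have := j.isLt; omega⟩ : Fin (s - 2)) = j := by
              apply Fin.ext; simp
            rw [this, hj]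
            simp
    rw [himg]
    exact heE

end Statement18Sem

section Statement18Real

open FirstOrder FirstOrder.Language

variable {s : ℕ}

lemma realize_irrel {M : Type} [(HLang s).Structure M] (φ : (HLang s).Formula (Fin 2))
    (v : Fin 2 → M) (xs : Fin 0 → M) :
    BoundedFormula.Realize φ v xs ↔ φ.Realize v := by
  rw [Formula.Realize, Subsingleton.elim (default : Fin 0 → M) xs]

lemma realize_congr_valuation {M : Type} [(HLang s).Structure M]
    {φ : (HLang s).Formula (Fin 2)} {v v' : Fin 2 → M} (h : ∀ j, v j = v' j)
    (xs : Fin 0 → M) : BoundedFormula.Realize φ v xs ↔ φ.Realize v' := by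
  rw [funext h]
  exact realize_irrel φ v' xs

lemma realize_atomF (G : HGraph s) (a b : {x : ℕ // x ∈ G.verts})
    (xs : Fin (s - 2) → {x : ℕ // x ∈ G.verts}) :
    @BoundedFormula.Realize (HLang s) _ (hgStructure s G) (Fin 2) (s - 2) (atomF s)
        ![a, b] xs ↔
      Finset.univ.image (fun k : Fin s => (Sum.elim ![a, b] xs (varsF s k)).1) ∈ G.edges := by
  letI := hgStructure s G
  rw [atomF]
  exact Iff.rfl

lemma realize_Dform_step (G : HGraph s) (h1v h2v : ℕ) (a b z : {x : ℕ // x ∈ G.verts}) :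
    (@BoundedFormula.Realize (HLang s) _ (hgStructure s G) (Fin 2) 1
        ((BoundedFormula.relabel
            (fun j : Fin 2 => if j = 0 then Sum.inl (0 : Fin 2) else Sum.inr (0 : Fin 1))
            (Dform s h1v)) ⊓
         (BoundedFormula.relabel
            (fun j : Fin 2 => if j = 0 then Sum.inr (0 : Fin 1) else Sum.inl (1 : Fin 2))
            (Dform s h2v)))
        ![a, b] (Fin.snoc default z)) ↔
      (@Formula.Realize (HLang s) _ (hgStructure s G) _ (Dform s h1v) ![a, z] ∧
       @Formula.Realize (HLang s) _ (hgStructure s G) _ (Dform s h2v) ![z, b]) := by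
  letI := hgStructure s G
  rw [BoundedFormula.realize_inf]
  refine and_congr ?_ ?_
  · exact BoundedFormula.realize_relabel.trans
      (realize_congr_valuation (by
        intro j
        fin_cases j <;> simp [Fin.snoc]) _)
  · exact BoundedFormula.realize_relabel.trans
      (realize_congr_valuation (by
        intro j
        fin_cases j <;> simp [Fin.snoc]) _)

lemma realize_Dform (hs : 2 ≤ s) (G : HGraph s) :
    ∀ i, 1 ≤ i → ∀ a b : {x : ℕ // x ∈ G.verts},
      (@Formula.Realize (HLang s) _ (hgStructure s G) _ (Dform s i) ![a, b] ↔
        (a = b ∨ ∃ t ≤ i, HasPath G.edges a.1 b.1 t)) := by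
  letI := hgStructure s G
  intro i
  induction i using Nat.strong_induction_on with
  | _ i ih =>
    match i with
    | 0 => intro h; omega
    | 1 =>
      intro _ a b
      rw [Dform]
      rw [Formula.realize_sup]
      have heq : @Formula.Realize (HLang s) _ (hgStructure s G) _
          (Term.equal (Term.var 0) (Term.var 1)) ![a, b] ↔ a = b := by
        rw [Formula.realize_equal]
        simp
      have hex : @Formula.Realize (HLang s) _ (hgStructure s G) _ ((atomF s).exs) ![a, b] ↔
          (a ≠ b ∧ HasPath G.edges a.1 b.1 1) := by
        rw [BoundedFormula.realize_exs]
        rw [← exists_tuple_iff hs G a b]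
        exact exists_congr fun xs => realize_atomF G a b xs
      rw [heq, hex]
      constructor
      · rintro (h | ⟨hne, hp⟩)
        · exact Or.inl h
        · exact Or.inr ⟨1, le_rfl, hp⟩
      · rintro (h | ⟨t, ht, hp⟩)
        · exact Or.inl h
        · rcases Nat.le_one_iff_eq_zero_or_eq_one.1 ht with rfl | rfl
          · exact Or.inl (Subtype.ext hp)
          · by_cases hab : a = b
            · exact Or.inl hab
            · exact Or.inr ⟨hab, hp⟩
    | (n + 2) =>
      intro _ a b
      rw [Dform]
      have hex : @Formula.Realize (HLang s) _ (hgStructure s G) _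
          (((BoundedFormula.relabel
              (fun j : Fin 2 => if j = 0 then Sum.inl (0 : Fin 2) else Sum.inr (0 : Fin 1))
              (Dform s ((n + 3) / 2))) ⊓
            (BoundedFormula.relabel
              (fun j : Fin 2 => if j = 0 then Sum.inr (0 : Fin 1) else Sum.inl (1 : Fin 2))
              (Dform s ((n + 2) / 2)))).ex) ![a, b] ↔
          ∃ z : {x : ℕ // x ∈ G.verts},
            (@Formula.Realize (HLang s) _ (hgStructure s G) _ (Dform s ((n + 3) / 2)) ![a, z] ∧
             @Formula.Realize (HLang s) _ (hgStructure s G) _ (Dform s ((n + 2) / 2)) ![z, b]) := by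
        refine (BoundedFormula.realize_ex).trans ?_
        exact exists_congr fun z => realize_Dform_step G _ _ a b z
      rw [hex]
      have hsum : (n + 3) / 2 + (n + 2) / 2 = n + 2 := by omega
      have hps := P_split G a b (h1 := (n + 3) / 2) (h2 := (n + 2) / 2) (by omega) (by omega)
      rw [hsum] at hps
      rw [hps]
      exact exists_congr fun z => and_congr
        (ih ((n + 3) / 2) (by omega) (by omega) a z)
        (ih ((n + 2) / 2) (by omega) (by omega) z b)

lemma qdepth_Dform0 : qdepth (Dform s 0) = 0 := by
  simp [Dform, Term.equal, Term.bdEqual, qdepth]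

end Statement18Real


/-- For every `i ≥ 1` there are first-order formulas `D_i(x_1, x_2)` and `D^=_i(x_1, x_2)` of
quantifier depth `⌈log₂ i⌉ + s - 2` expressing, in every `s`-hypergraph, that
`d(x_1, x_2) ≤ i` (or `x_1 = x_2`), respectively `d(x_1, x_2) = i`. -/
theorem statement18 (s : ℕ) (hs : 2 ≤ s) (i : ℕ) (hi : 1 ≤ i) :
    ∃ D Deq : (HLang s).Formula (Fin 2),
      qdepth D = Nat.clog 2 i + (s - 2) ∧ qdepth Deq = Nat.clog 2 i + (s - 2) ∧
      ∀ G : HGraph s, ∀ a b : {x : ℕ // x ∈ G.verts},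
        ((@FirstOrder.Language.Formula.Realize (HLang s) _ (hgStructure s G) (Fin 2)
            D ![a, b]) ↔
          ((a : ℕ) = (b : ℕ) ∨ ∃ t ≤ i, HasPath G.edges (a : ℕ) (b : ℕ) t)) ∧
        ((@FirstOrder.Language.Formula.Realize (HLang s) _ (hgStructure s G) (Fin 2)
            Deq ![a, b]) ↔
          (HasPath G.edges (a : ℕ) (b : ℕ) i ∧
            ∀ t < i, ¬ HasPath G.edges (a : ℕ) (b : ℕ) t)) := by
  classical
  refine ⟨Dform s i, Dform s i ⊓ (Dform s (i - 1)).not, qdepth_Dform s i hi, ?_, ?_⟩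
  · rw [qdepth_inf, qdepth_not, qdepth_Dform s i hi]
    by_cases hone : i = 1
    · subst hone
      norm_num [qdepth_Dform0]
    · rw [qdepth_Dform s (i - 1) (by omega)]
      have := Nat.clog_mono_right 2 (show i - 1 ≤ i by omega)
      omega
  · intro G a b
    letI := hgStructure s G
    have hD := realize_Dform hs G i hi a b
    have hprev : @FirstOrder.Language.Formula.Realize (HLang s) _ (hgStructure s G) _
        (Dform s (i - 1)) ![a, b] ↔
        (a = b ∨ ∃ t ≤ i - 1, HasPath G.edges a.1 b.1 t) := by
      by_cases hone : i = 1
      · subst hone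
        have h0 : @FirstOrder.Language.Formula.Realize (HLang s) _ (hgStructure s G) _
            (Dform s 0) ![a, b] ↔ a = b := by
          rw [show Dform s 0 = FirstOrder.Language.Term.equal
              (FirstOrder.Language.Term.var 0) (FirstOrder.Language.Term.var 1) from by
            simp [Dform]]
          rw [FirstOrder.Language.Formula.realize_equal]
          simp
        rw [show (1 : ℕ) - 1 = 0 from rfl, h0]
        constructor
        · exact fun h => Or.inl h
        · rintro (h | ⟨t, ht, hp⟩)
          · exact h
          · obtain rfl : t = 0 := by omega
            exact Subtype.ext hp
      · exact realize_Dform hs G (i - 1) (by omega) a b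
    constructor
    · rw [hD]
      constructor
      · rintro (h | h)
        · exact Or.inl (congrArg Subtype.val h)
        · exact Or.inr h
      · rintro (h | h)
        · exact Or.inl (Subtype.ext h)
        · exact Or.inr h
    · rw [FirstOrder.Language.Formula.realize_inf, FirstOrder.Language.Formula.realize_not,
        hD, hprev]
      constructor
      · rintro ⟨hP, hN⟩
        have hne : a ≠ b := fun h => hN (Or.inl h)
        have hno : ∀ t ≤ i - 1, ¬ HasPath G.edges a.1 b.1 t := fun t ht hp =>
          hN (Or.inr ⟨t, ht, hp⟩)
        rcases hP with h | ⟨t, ht, hp⟩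
        · exact absurd h hne
        · have hti : t = i := by
            by_contra hlt
            exact hno t (by omega) hp
          subst hti
          exact ⟨hp, fun t' ht' hp' => hno t' (by omega) hp'⟩
      · rintro ⟨hp, hno⟩
        refine ⟨Or.inr ⟨i, le_rfl, hp⟩, ?_⟩
        rintro (h | ⟨t, ht, hp'⟩)
        · exact hno 0 (by omega) (congrArg Subtype.val h)
        · exact hno t (by omega) hp'


end RandomHypergraph
end
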